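/- arXiv:2203.10589 — 4 statements merged into one kernel-verified Lean document; each statement's English description precedes it below -/
import Mathlib

section
/- Define S : ℕ → ℕ by S 0 = 1, S 1 = 1, S 2 = 1, and S n = S (n-1) + Σ_{j=3}^{n} S (j-2) · S (n-j) for n ≥ 3. Then S n equals the number of involutions σ on {1,…,n} that avoid the pattern 3412 and contain no transposition of the form (i, i+1); equivalently, the number of partial matchings on n points on a line with noncrossing arcs where no arc connects two adjacent points. -/
/-!
A matching on the interval `[a, b)` is classified by its first point `a`. Either `a` is
unmatched, leaving a matching on `[a + 1, b)`, or `a` is matched to some `k ≥ a + 2`; then,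
arcs being pairwise nested or separated, every other arc lies inside `(a, k)` or inside
`(k, b)`, and the matching is the arc `(a, k)` together with an arbitrary pair of matchings of
`[a + 1, k)` and `[k + 1, b)`. Hence the count of `[a, b)` satisfies the recurrence defining
`S` (with `j = k - a + 1`), and it depends only on `b - a`.
-/

/-- A partial matching on `n` linearly ordered points (0-indexed), given as a finite
set of arcs `(i,j)` with `i + 2 ≤ j` (so no arc connects two adjacent points),
with all arc endpoints pairwise distinct. -/
def IsMatching (n : ℕ) (M : Finset (Fin n × Fin n)) : Prop :=
  (∀ p ∈ M, p.1.val + 2 ≤ p.2.val) ∧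
  ∀ p ∈ M, ∀ q ∈ M, p ≠ q →
    p.1 ≠ q.1 ∧ p.1 ≠ q.2 ∧ p.2 ≠ q.1 ∧ p.2 ≠ q.2

/-- No two arcs cross. -/
def Noncrossing (n : ℕ) (M : Finset (Fin n × Fin n)) : Prop :=
  ∀ p ∈ M, ∀ q ∈ M, ¬(p.1 < q.1 ∧ q.1 < p.2 ∧ p.2 < q.2)

/-- The matching is invariant under the reflection `i ↦ n+1-i` (here `Fin.rev`). -/
def SymmMatching (n : ℕ) (M : Finset (Fin n × Fin n)) : Prop :=
  ∀ p ∈ M, (p.2.rev, p.1.rev) ∈ M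

open Finset

def ArcsCompatible (p q : ℕ × ℕ) : Prop :=
  p.2 < q.1 ∨ q.2 < p.1 ∨ (p.1 < q.1 ∧ q.2 < p.2) ∨ (q.1 < p.1 ∧ p.2 < q.2)

instance : Std.Symm ArcsCompatible :=
  ⟨fun _ _ h => by unfold ArcsCompatible at *; omega⟩

theorem arcsCompatible_iff {p q : ℕ × ℕ} (hp : p.1 < p.2) (hq : q.1 < q.2) :
    ArcsCompatible p q ↔ (p.1 ≠ q.1 ∧ p.1 ≠ q.2 ∧ p.2 ≠ q.1 ∧ p.2 ≠ q.2) ∧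
      ¬(p.1 < q.1 ∧ q.1 < p.2 ∧ p.2 < q.2) ∧ ¬(q.1 < p.1 ∧ p.1 < q.2 ∧ q.2 < p.2) := by
  unfold ArcsCompatible
  omega

-- Arcs live in `ℕ × ℕ` rather than `Fin n × Fin n`, so that the matchings of a subinterval
-- need no re-indexing.
structure IsNoncrossingMatching (M : Finset (ℕ × ℕ)) : Prop where
  gap : ∀ p ∈ M, p.1 + 2 ≤ p.2
  pairwise : (M : Set (ℕ × ℕ)).Pairwise ArcsCompatible

theorem IsNoncrossingMatching.mono {M N : Finset (ℕ × ℕ)} (hM : IsNoncrossingMatching M)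
    (hNM : N ⊆ M) : IsNoncrossingMatching N :=
  ⟨fun p hp => hM.gap p (hNM hp), hM.pairwise.mono (coe_subset.2 hNM)⟩

open Classical in
noncomputable def noncrossingMatchingsOn (I : Finset ℕ) : Finset (Finset (ℕ × ℕ)) :=
  (I ×ˢ I).powerset.filter IsNoncrossingMatching

theorem mem_noncrossingMatchingsOn {I : Finset ℕ} {M : Finset (ℕ × ℕ)} :
    M ∈ noncrossingMatchingsOn I ↔ M ⊆ I ×ˢ I ∧ IsNoncrossingMatching M := by
  classical
  rw [noncrossingMatchingsOn, mem_filter, mem_powerset]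

theorem noncrossingMatchingsOn_empty : noncrossingMatchingsOn ∅ = {∅} := by
  ext M
  simp only [mem_noncrossingMatchingsOn, empty_product, subset_empty, mem_singleton,
    and_iff_left_iff_imp]
  rintro rfl
  exact ⟨by simp, by simp⟩

theorem filter_unmatched_noncrossingMatchingsOn_Ico (a b : ℕ) :
    (noncrossingMatchingsOn (Ico a b)).filter (fun M => ∀ p ∈ M, p.1 ≠ a) =
      noncrossingMatchingsOn (Ico (a + 1) b) := by
  ext M
  simp only [mem_filter, mem_noncrossingMatchingsOn, subset_iff, mem_product, mem_Ico]
  constructor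
  · rintro ⟨⟨hsub, hM⟩, ha⟩
    refine ⟨fun p hp => ?_, hM⟩
    have := hsub hp; have := ha p hp; have := hM.gap p hp; omega
  · rintro ⟨hsub, hM⟩
    refine ⟨⟨fun p hp => ?_, hM⟩, fun p hp => ?_⟩ <;> have := hsub hp <;> omega

theorem IsNoncrossingMatching.mem_inner_or_outer {M : Finset (ℕ × ℕ)} {a b k : ℕ}
    (hM : IsNoncrossingMatching M) (hsub : M ⊆ Ico a b ×ˢ Ico a b) (hak : (a, k) ∈ M)
    {p : ℕ × ℕ} (hp : p ∈ M) (hpak : p ≠ (a, k)) :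
    p ∈ Ico (a + 1) k ×ˢ Ico (a + 1) k ∨ p ∈ Ico (k + 1) b ×ˢ Ico (k + 1) b := by
  have hcomp : ArcsCompatible (a, k) p := hM.pairwise hak hp hpak.symm
  have hp' := mem_product.1 (hsub hp)
  have := hM.gap p hp
  simp only [ArcsCompatible, mem_product, mem_Ico] at hcomp hp' ⊢
  omega

theorem IsNoncrossingMatching.insert_union {A B : Finset (ℕ × ℕ)} {a b k : ℕ}
    (hA : IsNoncrossingMatching A) (hB : IsNoncrossingMatching B)
    (hAsub : A ⊆ Ico (a + 1) k ×ˢ Ico (a + 1) k) (hBsub : B ⊆ Ico (k + 1) b ×ˢ Ico (k + 1) b)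
    (hk : a + 2 ≤ k) : IsNoncrossingMatching (insert (a, k) (A ∪ B)) := by
  simp only [subset_iff, mem_product, mem_Ico] at hAsub hBsub
  refine ⟨?_, ?_⟩
  · simp only [mem_insert, mem_union]
    rintro p (rfl | hp | hp)
    exacts [hk, hA.gap p hp, hB.gap p hp]
  · rw [coe_insert, coe_union, Set.pairwise_insert_of_symm, Set.pairwise_union_of_symm]
    refine ⟨⟨hA.pairwise, hB.pairwise, fun p hp q hq _ => ?_⟩, fun p hp _ => ?_⟩
    · have := hAsub hp; have := hBsub hq
      unfold ArcsCompatible; omega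
    · rcases hp with hp | hp
      · have := hAsub hp; unfold ArcsCompatible; omega
      · have := hBsub hp; unfold ArcsCompatible; omega

theorem IsNoncrossingMatching.insert_filter_union_filter {M : Finset (ℕ × ℕ)} {a b k : ℕ}
    (hM : IsNoncrossingMatching M) (hsub : M ⊆ Ico a b ×ˢ Ico a b) (hak : (a, k) ∈ M) :
    insert (a, k) (M.filter (·.2 < k) ∪ M.filter (k < ·.1)) = M := by
  ext p
  simp only [mem_insert, mem_union, mem_filter]
  constructor
  · rintro (rfl | ⟨hp, -⟩ | ⟨hp, -⟩) <;> assumption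
  · intro hp
    by_cases hpak : p = (a, k)
    · exact Or.inl hpak
    · right
      rcases hM.mem_inner_or_outer hsub hak hp hpak with h | h <;>
        simp only [mem_product, mem_Ico] at h
      · exact Or.inl ⟨hp, h.2.2⟩
      · exact Or.inr ⟨hp, h.1.1⟩

theorem filter_insert_union {A B : Finset (ℕ × ℕ)} {a b k : ℕ} (hk : a + 2 ≤ k)
    (hAsub : A ⊆ Ico (a + 1) k ×ˢ Ico (a + 1) k) (hBsub : B ⊆ Ico (k + 1) b ×ˢ Ico (k + 1) b) :
    (insert (a, k) (A ∪ B)).filter (·.2 < k) = A ∧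
      (insert (a, k) (A ∪ B)).filter (k < ·.1) = B := by
  simp only [subset_iff, mem_product, mem_Ico] at hAsub hBsub
  have hA₁ : A.filter (·.2 < k) = A := filter_true_of_mem fun p hp => (hAsub hp).2.2
  have hB₁ : B.filter (·.2 < k) = ∅ :=
    filter_false_of_mem fun p hp => by have := hBsub hp; omega
  have hA₂ : A.filter (k < ·.1) = ∅ :=
    filter_false_of_mem fun p hp => by have := hAsub hp; omega
  have hB₂ : B.filter (k < ·.1) = B := filter_true_of_mem fun p hp => (hBsub hp).1.1
  simp only [filter_insert, filter_union, hA₁, hB₁, hA₂, hB₂, lt_irrefl, if_false,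
    union_empty, empty_union, if_neg (show ¬k < a by omega), and_self]

theorem card_filter_mem_noncrossingMatchingsOn_Ico {a b k : ℕ} (hk : a + 2 ≤ k) (hkb : k < b) :
    ((noncrossingMatchingsOn (Ico a b)).filter ((a, k) ∈ ·)).card =
      (noncrossingMatchingsOn (Ico (a + 1) k)).card *
        (noncrossingMatchingsOn (Ico (k + 1) b)).card := by
  classical
  rw [← card_product]
  refine card_nbij' (fun M => (M.filter (·.2 < k), M.filter (k < ·.1)))
    (fun Q => insert (a, k) (Q.1 ∪ Q.2)) ?_ ?_ ?_ ?_
  · intro M hM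
    simp only [mem_coe, mem_filter, mem_noncrossingMatchingsOn] at hM
    obtain ⟨⟨hsub, hM⟩, hak⟩ := hM
    have split {p} (hp : p ∈ M) (hpak : p ≠ (a, k)) := hM.mem_inner_or_outer hsub hak hp hpak
    simp only [coe_product, Set.mem_prod, mem_coe, mem_noncrossingMatchingsOn]
    refine ⟨⟨fun p hp => ?_, hM.mono (filter_subset _ _)⟩,
      ⟨fun p hp => ?_, hM.mono (filter_subset _ _)⟩⟩ <;>
    · obtain ⟨hp, hpk⟩ := mem_filter.1 hp
      have := hM.gap p hp
      have := split hp (by rintro rfl; simp only at hpk; omega)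
      simp only [mem_product, mem_Ico] at this ⊢
      omega
  · rintro ⟨A, B⟩ hQ
    simp only [coe_product, Set.mem_prod, mem_coe, mem_noncrossingMatchingsOn] at hQ
    obtain ⟨⟨hAsub, hA⟩, hBsub, hB⟩ := hQ
    simp only [mem_coe, mem_filter, mem_noncrossingMatchingsOn, mem_insert_self,
      and_true]
    refine ⟨fun p hp => ?_, hA.insert_union hB hAsub hBsub hk⟩
    simp only [subset_iff, mem_product, mem_Ico] at hAsub hBsub
    simp only [mem_insert, mem_union] at hp
    simp only [mem_product, mem_Ico]
    rcases hp with rfl | hp | hp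
    · simp only; omega
    · have := hAsub hp; omega
    · have := hBsub hp; omega
  · intro M hM
    simp only [mem_coe, mem_filter, mem_noncrossingMatchingsOn] at hM
    exact hM.1.2.insert_filter_union_filter hM.1.1 hM.2
  · rintro ⟨A, B⟩ hQ
    simp only [coe_product, Set.mem_prod, mem_coe, mem_noncrossingMatchingsOn] at hQ
    simp only [Prod.mk.injEq]
    exact filter_insert_union hk hQ.1.1 hQ.2.1

theorem card_noncrossingMatchingsOn_Ico {a b : ℕ} (hab : a < b) :
    (noncrossingMatchingsOn (Ico a b)).card =
      (noncrossingMatchingsOn (Ico (a + 1) b)).card +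
        ∑ k ∈ Ico (a + 2) b, (noncrossingMatchingsOn (Ico (a + 1) k)).card *
          (noncrossingMatchingsOn (Ico (k + 1) b)).card := by
  classical
  have hmatched : (noncrossingMatchingsOn (Ico a b)).filter (fun M => ¬∀ p ∈ M, p.1 ≠ a) =
      (Ico (a + 2) b).biUnion fun k => (noncrossingMatchingsOn (Ico a b)).filter ((a, k) ∈ ·) := by
    ext M
    simp only [mem_filter, mem_biUnion, mem_Ico, mem_noncrossingMatchingsOn, not_forall,
      not_not]
    constructor
    · rintro ⟨⟨hsub, hM⟩, p, hp, rfl⟩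
      have hp' := mem_product.1 (hsub hp)
      have := hM.gap p hp
      simp only [mem_Ico] at hp'
      exact ⟨p.2, by omega, ⟨hsub, hM⟩, hp⟩
    · rintro ⟨k, -, hM, hak⟩
      exact ⟨hM, _, hak, rfl⟩
  have hdisj : (Ico (a + 2) b : Set ℕ).PairwiseDisjoint
      fun k => (noncrossingMatchingsOn (Ico a b)).filter ((a, k) ∈ ·) := by
    intro k hk k' hk' hkk'
    rw [mem_coe, mem_Ico] at hk hk'
    refine disjoint_filter.2 fun M hM hak hak' => ?_
    have := (mem_noncrossingMatchingsOn.1 hM).2.pairwise hak hak' (by simpa using hkk')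
    simp only [ArcsCompatible] at this
    omega
  rw [← card_filter_add_card_filter_not (fun M => ∀ p ∈ M, p.1 ≠ a),
    filter_unmatched_noncrossingMatchingsOn_Ico, hmatched, card_biUnion hdisj]
  congr 1
  refine sum_congr rfl fun k hk => ?_
  rw [mem_Ico] at hk
  exact card_filter_mem_noncrossingMatchingsOn_Ico hk.1 hk.2

theorem eq_card_noncrossingMatchingsOn_Ico (S : ℕ → ℕ) (h0 : S 0 = 1)
    (hS : ∀ n, 1 ≤ n → S n = S (n - 1) + ∑ j ∈ Icc 3 n, S (j - 2) * S (n - j))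
    {a b : ℕ} (hab : a ≤ b) : S (b - a) = (noncrossingMatchingsOn (Ico a b)).card := by
  induction h : b - a using Nat.strong_induction_on generalizing a b with
  | _ n ih =>
    rcases hab.eq_or_lt with rfl | hab
    · simp [← h, noncrossingMatchingsOn_empty, h0]
    have ih' {a' b'} (hab' : a' ≤ b') (hlt : b' - a' < n) :
        (noncrossingMatchingsOn (Ico a' b')).card = S (b' - a') := (ih _ hlt hab' rfl).symm
    rw [card_noncrossingMatchingsOn_Ico hab, ih' (by omega) (by omega), hS n (by omega)]
    congr 1
    · congr 1; omega
    · refine sum_nbij' (fun j => a + j - 1) (fun k => k + 1 - a) ?_ ?_ ?_ ?_ ?_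
      all_goals intro j hj; simp only [mem_Icc, mem_Ico] at hj ⊢
      all_goals try omega
      rw [ih' (by omega) (by omega), ih' (by omega) (by omega)]
      congr 2 <;> omega

def finPairVal (n : ℕ) : Fin n × Fin n ↪ ℕ × ℕ := Fin.valEmbedding.prodMap Fin.valEmbedding

theorem map_finPairVal_univ (n : ℕ) :
    (univ : Finset (Fin n × Fin n)).map (finPairVal n) = range n ×ˢ range n := by
  rw [← univ_product_univ, finPairVal, prodMap_map_product, Fin.map_valEmbedding_univ,
    Nat.Iio_eq_range]

theorem isNoncrossingMatching_map_finPairVal_iff {n : ℕ} {M : Finset (Fin n × Fin n)} :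
    IsNoncrossingMatching (M.map (finPairVal n)) ↔ IsMatching n M ∧ Noncrossing n M := by
  have hgap_iff : (∀ p ∈ M.map (finPairVal n), p.1 + 2 ≤ p.2) ↔ ∀ p ∈ M, p.1.val + 2 ≤ p.2.val :=
    forall_mem_map
  have hpair_iff : ((M.map (finPairVal n) : Set (ℕ × ℕ))).Pairwise ArcsCompatible ↔
      (M : Set (Fin n × Fin n)).Pairwise (Function.onFun ArcsCompatible (finPairVal n)) := by
    rw [coe_map, (finPairVal n).injective.injOn.pairwise_image]
  have hcompat {p q : Fin n × Fin n} (hp : p.1.val + 2 ≤ p.2.val) (hq : q.1.val + 2 ≤ q.2.val) :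
      ArcsCompatible (finPairVal n p) (finPairVal n q) ↔
        (p.1 ≠ q.1 ∧ p.1 ≠ q.2 ∧ p.2 ≠ q.1 ∧ p.2 ≠ q.2) ∧
          ¬(p.1 < q.1 ∧ q.1 < p.2 ∧ p.2 < q.2) ∧ ¬(q.1 < p.1 ∧ p.1 < q.2 ∧ q.2 < p.2) := by
    rw [arcsCompatible_iff (by simp [finPairVal]; omega) (by simp [finPairVal]; omega)]
    simp only [finPairVal, Function.Embedding.coe_prodMap, Prod.map, Fin.valEmbedding_apply,
      ne_eq, Fin.val_inj, Fin.val_fin_lt]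
  constructor
  · rintro ⟨hgap, hpair⟩
    rw [hgap_iff] at hgap
    rw [hpair_iff] at hpair
    refine ⟨⟨hgap, fun p hp q hq hpq => ((hcompat (hgap p hp) (hgap q hq)).1 (hpair hp hq hpq)).1⟩,
      fun p hp q hq => ?_⟩
    rcases eq_or_ne p q with rfl | hpq
    · exact fun h => lt_irrefl _ h.1
    · exact ((hcompat (hgap p hp) (hgap q hq)).1 (hpair hp hq hpq)).2.1
  · rintro ⟨⟨hgap, hdisj⟩, hnc⟩
    refine ⟨hgap_iff.2 hgap, hpair_iff.2 fun p hp q hq hpq => ?_⟩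
    exact (hcompat (hgap p hp) (hgap q hq)).2 ⟨hdisj p hp q hq hpq, hnc p hp q hq, hnc q hq p hp⟩

theorem card_isMatching_noncrossing (n : ℕ) :
    Nat.card {M : Finset (Fin n × Fin n) // IsMatching n M ∧ Noncrossing n M} =
      (noncrossingMatchingsOn (range n)).card := by
  classical
  rw [Nat.card_eq_fintype_card, Fintype.card_subtype,
    ← card_map (mapEmbedding (finPairVal n)).toEmbedding]
  congr 1
  ext N
  simp only [mem_map, mem_filter, mem_univ, true_and, mem_noncrossingMatchingsOn,
    RelEmbedding.coe_toEmbedding, mapEmbedding_apply]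
  constructor
  · rintro ⟨M, hM, rfl⟩
    exact ⟨map_finPairVal_univ n ▸ map_subset_map.2 (subset_univ M),
      isNoncrossingMatching_map_finPairVal_iff.2 hM⟩
  · rintro ⟨hsub, hN⟩
    obtain ⟨M, -, rfl⟩ := subset_map_iff.1 (map_finPairVal_univ n ▸ hsub)
    exact ⟨M, isNoncrossingMatching_map_finPairVal_iff.1 hN, rfl⟩

/-- if `S` satisfies `S 0 = S 1 = S 2 = 1` and the recurrence
`S n = S (n-1) + ∑_{j=3}^{n} S (j-2) * S (n-j)` for `n ≥ 3`, then `S n` is the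
number of noncrossing partial matchings on `n` points on a line where no arc
connects two adjacent points (equivalently, 3412-avoiding involutions on
`{1,…,n}` with no transposition `(i,i+1)`). -/
theorem statement0 (S : ℕ → ℕ) (h0 : S 0 = 1) (h1 : S 1 = 1) (h2 : S 2 = 1)
    (hrec : ∀ n, 3 ≤ n → S n = S (n - 1) + ∑ j ∈ Finset.Icc 3 n, S (j - 2) * S (n - j)) :
    ∀ n, S n =
      Nat.card {M : Finset (Fin n × Fin n) // IsMatching n M ∧ Noncrossing n M} := by
  have hS : ∀ n, 1 ≤ n → S n = S (n - 1) + ∑ j ∈ Icc 3 n, S (j - 2) * S (n - j) := by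
    intro n hn
    rcases Nat.lt_or_ge n 3 with h | h
    · interval_cases n <;> simp [h0, h1, h2]
    · exact hrec n h
  intro n
  rw [card_isMatching_noncrossing, ← Nat.Ico_zero_eq_range,
    ← eq_card_noncrossingMatchingsOn_Ico S h0 hS (Nat.zero_le n), Nat.sub_zero]
end

section
/- Let R n be the number of noncrossing partial matchings on n linearly ordered points with no arc connecting adjacent points that are invariant under the reflection i ↦ n+1-i. Then R 0 = R 1 = R 2 = 1, R 3 = R 4 = 2, R 5 = 4, and for all n ≥ 6, R n = 2·R (n-2) + Σ_{j=3}^{⌊n/2⌋} S (j-2) · R (n-2j), where S m is the number of noncrossing partial matchings on m points with no arc connecting adjacent points. -/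
/-- The number of noncrossing adjacent-arc-free partial matchings on `n` points. -/
noncomputable def S (n : ℕ) : ℕ :=
  Nat.card {M : Finset (Fin n × Fin n) // IsMatching n M ∧ Noncrossing n M}

/-- The number of symmetric noncrossing adjacent-arc-free partial matchings. -/
noncomputable def R (n : ℕ) : ℕ :=
  Nat.card {M : Finset (Fin n × Fin n) // IsMatching n M ∧ Noncrossing n M ∧ SymmMatching n M}

namespace Stm

def cand (n : ℕ) : Finset (ℕ × ℕ) :=
  (Finset.range n ×ˢ Finset.range n).filter fun p => p.1 + 2 ≤ p.2

def NDisj (M : Finset (ℕ × ℕ)) : Prop :=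
  ∀ p ∈ M, ∀ q ∈ M, p ≠ q → p.1 ≠ q.1 ∧ p.1 ≠ q.2 ∧ p.2 ≠ q.1 ∧ p.2 ≠ q.2

def NCross (M : Finset (ℕ × ℕ)) : Prop :=
  ∀ p ∈ M, ∀ q ∈ M, ¬(p.1 < q.1 ∧ q.1 < p.2 ∧ p.2 < q.2)

def NSymm (n : ℕ) (M : Finset (ℕ × ℕ)) : Prop :=
  ∀ p ∈ M, (n - 1 - p.2, n - 1 - p.1) ∈ M

instance (M : Finset (ℕ × ℕ)) : Decidable (NDisj M) :=
  inferInstanceAs (Decidable (∀ p ∈ M, ∀ q ∈ M, p ≠ q →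
    p.1 ≠ q.1 ∧ p.1 ≠ q.2 ∧ p.2 ≠ q.1 ∧ p.2 ≠ q.2))

instance (M : Finset (ℕ × ℕ)) : Decidable (NCross M) :=
  inferInstanceAs (Decidable (∀ p ∈ M, ∀ q ∈ M, ¬(p.1 < q.1 ∧ q.1 < p.2 ∧ p.2 < q.2)))

instance (n : ℕ) (M : Finset (ℕ × ℕ)) : Decidable (NSymm n M) :=
  inferInstanceAs (Decidable (∀ p ∈ M, (n - 1 - p.2, n - 1 - p.1) ∈ M))

def SF (n : ℕ) : Finset (Finset (ℕ × ℕ)) :=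
  (cand n).powerset.filter fun M => NDisj M ∧ NCross M

def RF (n : ℕ) : Finset (Finset (ℕ × ℕ)) :=
  (cand n).powerset.filter fun M => NDisj M ∧ NCross M ∧ NSymm n M

lemma mem_cand {n : ℕ} {p : ℕ × ℕ} : p ∈ cand n ↔ p.1 + 2 ≤ p.2 ∧ p.2 < n := by
  simp only [cand, Finset.mem_filter, Finset.mem_product, Finset.mem_range]
  omega

lemma mem_SF {n : ℕ} {M : Finset (ℕ × ℕ)} :
    M ∈ SF n ↔ (∀ p ∈ M, p.1 + 2 ≤ p.2 ∧ p.2 < n) ∧ NDisj M ∧ NCross M := by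
  simp only [SF, Finset.mem_filter, Finset.mem_powerset, Finset.subset_iff]
  constructor
  · rintro ⟨h1, h2⟩; exact ⟨fun p hp => mem_cand.1 (h1 hp), h2⟩
  · rintro ⟨h1, h2⟩; exact ⟨fun {p} hp => mem_cand.2 (h1 p hp), h2⟩

lemma mem_RF {n : ℕ} {M : Finset (ℕ × ℕ)} :
    M ∈ RF n ↔ (∀ p ∈ M, p.1 + 2 ≤ p.2 ∧ p.2 < n) ∧ NDisj M ∧ NCross M ∧ NSymm n M := by
  simp only [RF, Finset.mem_filter, Finset.mem_powerset, Finset.subset_iff]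
  constructor
  · rintro ⟨h1, h2⟩; exact ⟨fun p hp => mem_cand.1 (h1 hp), h2⟩
  · rintro ⟨h1, h2⟩; exact ⟨fun {p} hp => mem_cand.2 (h1 p hp), h2⟩

instance (n : ℕ) (M : Finset (Fin n × Fin n)) : Decidable (IsMatching n M) :=
  inferInstanceAs (Decidable ((∀ p ∈ M, p.1.val + 2 ≤ p.2.val) ∧
    ∀ p ∈ M, ∀ q ∈ M, p ≠ q → p.1 ≠ q.1 ∧ p.1 ≠ q.2 ∧ p.2 ≠ q.1 ∧ p.2 ≠ q.2))

instance (n : ℕ) (M : Finset (Fin n × Fin n)) : Decidable (Noncrossing n M) :=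
  inferInstanceAs (Decidable (∀ p ∈ M, ∀ q ∈ M, ¬(p.1 < q.1 ∧ q.1 < p.2 ∧ p.2 < q.2)))

instance (n : ℕ) (M : Finset (Fin n × Fin n)) : Decidable (SymmMatching n M) :=
  inferInstanceAs (Decidable (∀ p ∈ M, (p.2.rev, p.1.rev) ∈ M))

/-- the coordinate map -/
def toNat {n : ℕ} (M : Finset (Fin n × Fin n)) : Finset (ℕ × ℕ) :=
  M.image fun p => (p.1.val, p.2.val)

lemma mem_toNat {n : ℕ} {M : Finset (Fin n × Fin n)} {q : ℕ × ℕ} :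
    q ∈ toNat M ↔ ∃ p ∈ M, p.1.val = q.1 ∧ p.2.val = q.2 := by
  simp [toNat, Prod.ext_iff]

lemma toNat_inj {n : ℕ} : Function.Injective (toNat (n := n)) := by
  apply Finset.image_injective
  intro p q h
  simp only [Prod.ext_iff] at h ⊢
  exact ⟨Fin.val_injective h.1, Fin.val_injective h.2⟩

lemma natCard_key {n : ℕ} (P : Finset (Fin n × Fin n) → Prop) [DecidablePred P]
    (F : Finset (Finset (ℕ × ℕ)))
    (hiff : ∀ M, P M ↔ toNat M ∈ F)
    (hsurj : ∀ N ∈ F, ∃ M : Finset (Fin n × Fin n), toNat M = N) :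
    Nat.card {M : Finset (Fin n × Fin n) // P M} = F.card := by
  rw [Nat.card_eq_fintype_card, Fintype.card_subtype]
  apply Finset.card_bij (fun M _ => toNat M)
  · intro M hM
    exact (hiff M).1 (by simpa using hM)
  · intro M1 h1 M2 h2 h
    exact toNat_inj h
  · intro N hN
    obtain ⟨M, hMN⟩ := hsurj N hN
    refine ⟨M, ?_, hMN⟩
    simp only [Finset.mem_filter, Finset.mem_univ, true_and]
    exact (hiff M).2 (hMN ▸ hN)

lemma toNat_surj {n : ℕ} (N : Finset (ℕ × ℕ)) (hN : ∀ p ∈ N, p.1 < n ∧ p.2 < n) :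
    ∃ M : Finset (Fin n × Fin n), toNat M = N := by
  classical
  refine ⟨N.attach.image fun x => (⟨x.1.1, (hN x.1 x.2).1⟩, ⟨x.1.2, (hN x.1 x.2).2⟩), ?_⟩
  ext q
  simp only [mem_toNat, Finset.mem_image, Finset.mem_attach, true_and, Subtype.exists]
  constructor
  · rintro ⟨p, ⟨a, ha, rfl⟩, h1, h2⟩
    simp only at h1 h2
    have : q = a := Prod.ext h1.symm h2.symm
    rw [this]; exact ha
  · intro hq
    exact ⟨_, ⟨q, hq, rfl⟩, rfl, rfl⟩

lemma iffRF {n : ℕ} (M : Finset (Fin n × Fin n)) :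
    (IsMatching n M ∧ Noncrossing n M ∧ SymmMatching n M) ↔ toNat M ∈ RF n := by
  rw [mem_RF]
  constructor
  · rintro ⟨⟨ha, hd⟩, hc, hs⟩
    refine ⟨?_, ?_, ?_, ?_⟩
    · rintro q hq
      obtain ⟨p, hp, e1, e2⟩ := mem_toNat.1 hq
      exact ⟨by rw [← e1, ← e2]; exact ha p hp, by omega⟩
    · rintro q hq q' hq' hne
      obtain ⟨p, hp, e1, e2⟩ := mem_toNat.1 hq
      obtain ⟨p', hp', e1', e2'⟩ := mem_toNat.1 hq'
      have hpp : p ≠ p' := by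
        rintro rfl
        apply hne
        rw [Prod.ext_iff]; omega
      have := hd p hp p' hp' hpp
      simp only [ne_eq, Fin.ext_iff] at this
      omega
    · rintro q hq q' hq'
      obtain ⟨p, hp, e1, e2⟩ := mem_toNat.1 hq
      obtain ⟨p', hp', e1', e2'⟩ := mem_toNat.1 hq'
      have := hc p hp p' hp'
      simp only [Fin.lt_def] at this
      omega
    · rintro q hq
      obtain ⟨p, hp, e1, e2⟩ := mem_toNat.1 hq
      have := hs p hp
      refine mem_toNat.2 ⟨_, this, ?_, ?_⟩ <;> simp only [Fin.val_rev] <;> omega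
  · rintro ⟨ha, hd, hc, hs⟩
    have hmem : ∀ p ∈ M, ((p.1 : ℕ), (p.2 : ℕ)) ∈ toNat M :=
      fun p hp => mem_toNat.2 ⟨p, hp, rfl, rfl⟩
    refine ⟨⟨?_, ?_⟩, ?_, ?_⟩
    · intro p hp; exact (ha _ (hmem p hp)).1
    · intro p hp q hq hne
      have hne' : ((p.1 : ℕ), (p.2 : ℕ)) ≠ ((q.1 : ℕ), (q.2 : ℕ)) := by
        simp only [ne_eq, Prod.ext_iff]
        intro h
        exact hne (Prod.ext (Fin.val_injective h.1) (Fin.val_injective h.2))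
      have := hd _ (hmem p hp) _ (hmem q hq) hne'
      simp only [ne_eq, Fin.ext_iff]
      simp only [ne_eq] at this
      exact this
    · intro p hp q hq
      have := hc _ (hmem p hp) _ (hmem q hq)
      simp only [Fin.lt_def]
      exact this
    · intro p hp
      have hh := hs _ (hmem p hp)
      obtain ⟨q, hq, e1, e2⟩ := mem_toNat.1 hh
      have hq2 : (p.2 : ℕ) < n := p.2.isLt
      have hq1 : (p.1 : ℕ) < n := p.1.isLt
      have : q = (p.2.rev, p.1.rev) := by
        refine Prod.ext (Fin.ext ?_) (Fin.ext ?_) <;>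
          simp only [Fin.val_rev] at * <;> omega
      rw [← this]; exact hq

end Stm

namespace Stm

lemma iffSF {n : ℕ} (M : Finset (Fin n × Fin n)) :
    (IsMatching n M ∧ Noncrossing n M) ↔ toNat M ∈ SF n := by
  rw [mem_SF]
  constructor
  · rintro ⟨⟨ha, hd⟩, hc⟩
    refine ⟨?_, ?_, ?_⟩
    · rintro q hq
      obtain ⟨p, hp, e1, e2⟩ := mem_toNat.1 hq
      exact ⟨by rw [← e1, ← e2]; exact ha p hp, by omega⟩
    · rintro q hq q' hq' hne
      obtain ⟨p, hp, e1, e2⟩ := mem_toNat.1 hq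
      obtain ⟨p', hp', e1', e2'⟩ := mem_toNat.1 hq'
      have hpp : p ≠ p' := by
        rintro rfl
        apply hne
        rw [Prod.ext_iff]; omega
      have := hd p hp p' hp' hpp
      simp only [ne_eq, Fin.ext_iff] at this
      omega
    · rintro q hq q' hq'
      obtain ⟨p, hp, e1, e2⟩ := mem_toNat.1 hq
      obtain ⟨p', hp', e1', e2'⟩ := mem_toNat.1 hq'
      have := hc p hp p' hp'
      simp only [Fin.lt_def] at this
      omega
  · rintro ⟨ha, hd, hc⟩
    have hmem : ∀ p ∈ M, ((p.1 : ℕ), (p.2 : ℕ)) ∈ toNat M :=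
      fun p hp => mem_toNat.2 ⟨p, hp, rfl, rfl⟩
    refine ⟨⟨?_, ?_⟩, ?_⟩
    · intro p hp; exact (ha _ (hmem p hp)).1
    · intro p hp q hq hne
      have hne' : ((p.1 : ℕ), (p.2 : ℕ)) ≠ ((q.1 : ℕ), (q.2 : ℕ)) := by
        simp only [ne_eq, Prod.ext_iff]
        intro h
        exact hne (Prod.ext (Fin.val_injective h.1) (Fin.val_injective h.2))
      have := hd _ (hmem p hp) _ (hmem q hq) hne'
      simp only [ne_eq, Fin.ext_iff]
      simp only [ne_eq] at this
      exact this
    · intro p hp q hq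
      have := hc _ (hmem p hp) _ (hmem q hq)
      simp only [Fin.lt_def]
      exact this

lemma R_eq (n : ℕ) : R n = (RF n).card := by
  apply natCard_key _ (RF n) iffRF
  intro N hN
  apply toNat_surj
  intro p hp
  have := (mem_RF.1 hN).1 p hp
  omega

lemma S_eq (n : ℕ) : S n = (SF n).card := by
  apply natCard_key _ (SF n) iffSF
  intro N hN
  apply toNat_surj
  intro p hp
  have := (mem_SF.1 hN).1 p hp
  omega

/-! ### shifting and reflecting -/

def up (k : ℕ) (M : Finset (ℕ × ℕ)) : Finset (ℕ × ℕ) :=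
  M.image fun p => (p.1 + k, p.2 + k)

def down (k : ℕ) (M : Finset (ℕ × ℕ)) : Finset (ℕ × ℕ) :=
  M.image fun p => (p.1 - k, p.2 - k)

def refl (c : ℕ) (M : Finset (ℕ × ℕ)) : Finset (ℕ × ℕ) :=
  M.image fun p => (c - p.2, c - p.1)

lemma mem_up {k : ℕ} {M : Finset (ℕ × ℕ)} {q : ℕ × ℕ} :
    q ∈ up k M ↔ ∃ p ∈ M, p.1 + k = q.1 ∧ p.2 + k = q.2 := by
  simp [up, Prod.ext_iff]

lemma mem_down {k : ℕ} {M : Finset (ℕ × ℕ)} {q : ℕ × ℕ} :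
    q ∈ down k M ↔ ∃ p ∈ M, p.1 - k = q.1 ∧ p.2 - k = q.2 := by
  simp [down, Prod.ext_iff]

lemma mem_refl {c : ℕ} {M : Finset (ℕ × ℕ)} {q : ℕ × ℕ} :
    q ∈ refl c M ↔ ∃ p ∈ M, c - p.2 = q.1 ∧ c - p.1 = q.2 := by
  simp [refl, Prod.ext_iff]

lemma down_up (k : ℕ) (M : Finset (ℕ × ℕ)) : down k (up k M) = M := by
  ext q
  rw [mem_down]
  constructor
  · rintro ⟨p, hp, e1, e2⟩
    obtain ⟨r, hr, f1, f2⟩ := mem_up.1 hp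
    have : q = r := Prod.ext (by omega) (by omega)
    rw [this]; exact hr
  · intro hq
    exact ⟨(q.1 + k, q.2 + k), mem_up.2 ⟨q, hq, rfl, rfl⟩, by omega, by omega⟩

lemma up_down (k : ℕ) (M : Finset (ℕ × ℕ)) (h : ∀ p ∈ M, k ≤ p.1 ∧ k ≤ p.2) :
    up k (down k M) = M := by
  ext q
  rw [mem_up]
  constructor
  · rintro ⟨p, hp, e1, e2⟩
    obtain ⟨r, hr, f1, f2⟩ := mem_down.1 hp
    have hb := h r hr
    have : q = r := Prod.ext (by omega) (by omega)
    rw [this]; exact hr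
  · intro hq
    have hb := h q hq
    exact ⟨(q.1 - k, q.2 - k), mem_down.2 ⟨q, hq, rfl, rfl⟩, by omega, by omega⟩

lemma up_disj {k : ℕ} {M : Finset (ℕ × ℕ)} (h : NDisj M) : NDisj (up k M) := by
  rintro q hq q' hq' hne
  obtain ⟨p, hp, e1, e2⟩ := mem_up.1 hq
  obtain ⟨p', hp', f1, f2⟩ := mem_up.1 hq'
  rcases eq_or_ne p p' with rfl | hpp
  · exact absurd (Prod.ext (by omega) (by omega)) hne
  · have := h p hp p' hp' hpp
    simp only [ne_eq] at this ⊢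
    omega

lemma up_cross {k : ℕ} {M : Finset (ℕ × ℕ)} (h : NCross M) : NCross (up k M) := by
  rintro q hq q' hq'
  obtain ⟨p, hp, e1, e2⟩ := mem_up.1 hq
  obtain ⟨p', hp', f1, f2⟩ := mem_up.1 hq'
  have := h p hp p' hp'
  omega

lemma refl_disj {c : ℕ} {M : Finset (ℕ × ℕ)}
    (hb : ∀ p ∈ M, p.1 + 2 ≤ p.2 ∧ p.2 ≤ c) (h : NDisj M) : NDisj (refl c M) := by
  rintro q hq q' hq' hne
  obtain ⟨p, hp, e1, e2⟩ := mem_refl.1 hq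
  obtain ⟨p', hp', f1, f2⟩ := mem_refl.1 hq'
  have b1 := hb p hp
  have b2 := hb p' hp'
  rcases eq_or_ne p p' with rfl | hpp
  · exact absurd (Prod.ext (by omega) (by omega)) hne
  · have := h p hp p' hp' hpp
    simp only [ne_eq] at this ⊢
    omega

lemma refl_cross {c : ℕ} {M : Finset (ℕ × ℕ)}
    (hb : ∀ p ∈ M, p.1 + 2 ≤ p.2 ∧ p.2 ≤ c) (h : NCross M) : NCross (refl c M) := by
  rintro q hq q' hq'
  obtain ⟨p, hp, e1, e2⟩ := mem_refl.1 hq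
  obtain ⟨p', hp', f1, f2⟩ := mem_refl.1 hq'
  have b1 := hb p hp
  have b2 := hb p' hp'
  have := h p' hp' p hp
  omega

/-- union of two separated blocks -/
lemma sep_disj {M1 M2 : Finset (ℕ × ℕ)}
    (sep : ∀ p ∈ M1, ∀ q ∈ M2, p.2 < q.1)
    (hb1 : ∀ p ∈ M1, p.1 ≤ p.2) (hb2 : ∀ p ∈ M2, p.1 ≤ p.2)
    (h1 : NDisj M1) (h2 : NDisj M2) : NDisj (M1 ∪ M2) := by
  rintro q hq q' hq' hne
  rw [Finset.mem_union] at hq hq'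
  rcases hq with hq | hq <;> rcases hq' with hq' | hq'
  · exact h1 q hq q' hq' hne
  · have := sep q hq q' hq'
    have := hb1 q hq
    have := hb2 q' hq'
    simp only [ne_eq]; omega
  · have := sep q' hq' q hq
    have := hb1 q' hq'
    have := hb2 q hq
    simp only [ne_eq]; omega
  · exact h2 q hq q' hq' hne

lemma sep_cross {M1 M2 : Finset (ℕ × ℕ)}
    (sep : ∀ p ∈ M1, ∀ q ∈ M2, p.2 < q.1)
    (hb1 : ∀ p ∈ M1, p.1 ≤ p.2) (hb2 : ∀ p ∈ M2, p.1 ≤ p.2)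
    (h1 : NCross M1) (h2 : NCross M2) : NCross (M1 ∪ M2) := by
  rintro q hq q' hq'
  rw [Finset.mem_union] at hq hq'
  rcases hq with hq | hq <;> rcases hq' with hq' | hq'
  · exact h1 q hq q' hq'
  · have := sep q hq q' hq'
    have := hb1 q hq
    have := hb2 q' hq'
    omega
  · have := sep q' hq' q hq
    have := hb1 q' hq'
    have := hb2 q hq
    omega
  · exact h2 q hq q' hq'

/-- inserting an arc that nests strictly around everything -/
lemma nest_disj {x : ℕ × ℕ} {M : Finset (ℕ × ℕ)}
    (hnest : ∀ p ∈ M, x.1 < p.1 ∧ p.2 < x.2)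
    (hb : ∀ p ∈ M, p.1 ≤ p.2)
    (h : NDisj M) : NDisj (insert x M) := by
  rintro q hq q' hq' hne
  rw [Finset.mem_insert] at hq hq'
  rcases hq with rfl | hq <;> rcases hq' with rfl | hq'
  · exact absurd rfl hne
  · have := hnest q' hq'
    have := hb q' hq'
    simp only [ne_eq]; omega
  · have := hnest q hq
    have := hb q hq
    simp only [ne_eq]; omega
  · exact h q hq q' hq' hne

lemma nest_cross {x : ℕ × ℕ} {M : Finset (ℕ × ℕ)}
    (hnest : ∀ p ∈ M, x.1 < p.1 ∧ p.2 < x.2)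
    (hb : ∀ p ∈ M, p.1 ≤ p.2)
    (h : NCross M) : NCross (insert x M) := by
  rintro q hq q' hq'
  rw [Finset.mem_insert] at hq hq'
  rcases hq with rfl | hq <;> rcases hq' with rfl | hq'
  · omega
  · have := hnest q' hq'
    have := hb q' hq'
    omega
  · have := hnest q hq
    have := hb q hq
    omega
  · exact h q hq q' hq'

end Stm

namespace Stm

def AF (n : ℕ) : Finset (Finset (ℕ × ℕ)) := (RF n).filter fun M => ∀ p ∈ M, p.1 ≠ 0
def BF (n : ℕ) : Finset (Finset (ℕ × ℕ)) := (RF n).filter fun M => (0, n - 1) ∈ M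
def CF (n j : ℕ) : Finset (Finset (ℕ × ℕ)) := (RF n).filter fun M => (0, j - 1) ∈ M

lemma down_disj {k : ℕ} {M : Finset (ℕ × ℕ)} (hb : ∀ p ∈ M, k ≤ p.1 ∧ k ≤ p.2)
    (h : NDisj M) : NDisj (down k M) := by
  rintro q hq q' hq' hne
  obtain ⟨p, hp, e1, e2⟩ := mem_down.1 hq
  obtain ⟨p', hp', f1, f2⟩ := mem_down.1 hq'
  have b1 := hb p hp
  have b2 := hb p' hp'
  rcases eq_or_ne p p' with rfl | hpp
  · exact absurd (Prod.ext (by omega) (by omega)) hne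
  · have := h p hp p' hp' hpp
    simp only [ne_eq] at this ⊢
    omega

lemma down_cross {k : ℕ} {M : Finset (ℕ × ℕ)} (hb : ∀ p ∈ M, k ≤ p.1 ∧ k ≤ p.2)
    (h : NCross M) : NCross (down k M) := by
  rintro q hq q' hq'
  obtain ⟨p, hp, e1, e2⟩ := mem_down.1 hq
  obtain ⟨p', hp', f1, f2⟩ := mem_down.1 hq'
  have b1 := hb p hp
  have b2 := hb p' hp'
  have := h p hp p' hp'
  omega

lemma down1_RF {n : ℕ} {M : Finset (ℕ × ℕ)} (hn : 2 ≤ n)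
    (harcs : ∀ p ∈ M, p.1 + 2 ≤ p.2 ∧ p.2 < n)
    (hb : ∀ p ∈ M, 1 ≤ p.1 ∧ p.2 + 2 ≤ n)
    (hd : NDisj M) (hc : NCross M) (hs : NSymm n M) : down 1 M ∈ RF (n - 2) := by
  rw [mem_RF]
  refine ⟨?_, ?_, ?_, ?_⟩
  · intro q hq
    obtain ⟨p, hp, e1, e2⟩ := mem_down.1 hq
    have := harcs p hp
    have := hb p hp
    omega
  · exact down_disj (fun p hp => ⟨(hb p hp).1, by have := harcs p hp; omega⟩) hd
  · exact down_cross (fun p hp => ⟨(hb p hp).1, by have := harcs p hp; omega⟩) hc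
  · intro q hq
    obtain ⟨p, hp, e1, e2⟩ := mem_down.1 hq
    have h1 := harcs p hp
    have h2 := hb p hp
    have hr := hs p hp
    refine mem_down.2 ⟨(n - 1 - p.2, n - 1 - p.1), hr, by omega, by omega⟩

lemma up1_RF {n : ℕ} {M : Finset (ℕ × ℕ)} (hn : 2 ≤ n)
    (hM : M ∈ RF (n - 2)) : up 1 M ∈ RF n := by
  rw [mem_RF] at hM ⊢
  obtain ⟨harcs, hd, hc, hs⟩ := hM
  refine ⟨?_, up_disj hd, up_cross hc, ?_⟩
  · intro q hq
    obtain ⟨p, hp, e1, e2⟩ := mem_up.1 hq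
    have := harcs p hp
    omega
  · intro q hq
    obtain ⟨p, hp, e1, e2⟩ := mem_up.1 hq
    have h1 := harcs p hp
    have hr := hs p hp
    have h3 := harcs _ hr
    refine mem_up.2 ⟨(n - 2 - 1 - p.2, n - 2 - 1 - p.1), hr, by omega, by omega⟩

lemma AF_bound {n : ℕ} {M : Finset (ℕ × ℕ)} (hM : M ∈ AF n) :
    ∀ p ∈ M, 1 ≤ p.1 ∧ p.1 + 2 ≤ p.2 ∧ p.2 + 2 ≤ n := by
  rw [AF, Finset.mem_filter, mem_RF] at hM
  obtain ⟨⟨harcs, hd, hc, hs⟩, h0⟩ := hM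
  intro p hp
  have h1 := harcs p hp
  have h2 := h0 p hp
  have hr := hs p hp
  have h3 := h0 _ hr
  simp only at h3
  omega

lemma card_AF {n : ℕ} (hn : 6 ≤ n) : (AF n).card = (RF (n - 2)).card := by
  apply Finset.card_bij' (fun M _ => down 1 M) (fun M _ => up 1 M)
  · intro M hM
    have hb := AF_bound hM
    rw [AF, Finset.mem_filter, mem_RF] at hM
    obtain ⟨⟨harcs, hd, hc, hs⟩, h0⟩ := hM
    exact down1_RF (by omega) harcs (fun p hp => by have := hb p hp; omega) hd hc hs
  · intro M hM
    rw [AF, Finset.mem_filter]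
    refine ⟨up1_RF (by omega) hM, ?_⟩
    intro p hp
    obtain ⟨r, hr, e1, e2⟩ := mem_up.1 hp
    omega
  · intro M hM
    exact up_down 1 M fun p hp => by have := AF_bound hM p hp; omega
  · intro M hM
    exact down_up 1 M

lemma BF_bound {n : ℕ} {M : Finset (ℕ × ℕ)} (hn : 6 ≤ n) (hM : M ∈ BF n) :
    ∀ p ∈ M.erase (0, n - 1), 1 ≤ p.1 ∧ p.1 + 2 ≤ p.2 ∧ p.2 + 2 ≤ n := by
  rw [BF, Finset.mem_filter, mem_RF] at hM
  obtain ⟨⟨harcs, hd, hc, hs⟩, h0⟩ := hM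
  intro p hp
  rw [Finset.mem_erase] at hp
  obtain ⟨hne, hp⟩ := hp
  have h1 := harcs p hp
  have := hd p hp _ h0 hne
  simp only [ne_eq] at this
  omega

lemma card_BF {n : ℕ} (hn : 6 ≤ n) : (BF n).card = (RF (n - 2)).card := by
  apply Finset.card_bij' (fun M _ => down 1 (M.erase (0, n - 1)))
      (fun M _ => insert (0, n - 1) (up 1 M))
  · intro M hM
    have hb := BF_bound hn hM
    rw [BF, Finset.mem_filter, mem_RF] at hM
    obtain ⟨⟨harcs, hd, hc, hs⟩, h0⟩ := hM
    apply down1_RF (by omega) (fun p hp => harcs p (Finset.mem_of_mem_erase hp))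
      (fun p hp => by have := hb p hp; omega)
      (fun p hp q hq => hd p (Finset.mem_of_mem_erase hp) q (Finset.mem_of_mem_erase hq))
      (fun p hp q hq => hc p (Finset.mem_of_mem_erase hp) q (Finset.mem_of_mem_erase hq))
    -- NSymm of erase
    intro p hp
    rw [Finset.mem_erase] at hp ⊢
    obtain ⟨hne, hp⟩ := hp
    have h1 := harcs p hp
    have h2 := hb p (Finset.mem_erase.2 ⟨hne, hp⟩)
    refine ⟨?_, hs p hp⟩
    simp only [ne_eq, Prod.ext_iff]
    omega
  · intro M hM
    have hup := up1_RF (by omega) hM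
    rw [BF, Finset.mem_filter]
    rw [mem_RF] at hup ⊢
    obtain ⟨harcs, hd, hc, hs⟩ := hup
    have hnest : ∀ p ∈ up 1 M, (0, n - 1).1 < p.1 ∧ p.2 < (0, n - 1).2 := by
      intro p hp
      rw [mem_RF] at hM
      obtain ⟨r, hr, e1, e2⟩ := mem_up.1 hp
      have := (hM.1) r hr
      simp only
      omega
    refine ⟨⟨?_, nest_disj hnest (fun p hp => by have := harcs p hp; omega) hd,
        nest_cross hnest (fun p hp => by have := harcs p hp; omega) hc, ?_⟩,
        Finset.mem_insert_self _ _⟩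
    · intro p hp
      rw [Finset.mem_insert] at hp
      rcases hp with rfl | hp
      · simp only; omega
      · exact harcs p hp
    · intro p hp
      rw [Finset.mem_insert] at hp
      rcases hp with rfl | hp
      · apply Finset.mem_insert.2
        left
        simp only [Prod.ext_iff]
        omega
      · exact Finset.mem_insert.2 (Or.inr (hs p hp))
  · intro M hM
    -- insert x (up 1 (down 1 (M.erase x))) = M
    have hb := BF_bound hn hM
    rw [up_down 1 _ (fun p hp => by have := hb p hp; omega)]
    rw [BF, Finset.mem_filter] at hM
    exact Finset.insert_erase hM.2
  · intro M hM
    -- down 1 ((insert x (up 1 M)).erase x) = M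
    have hx : (0, n - 1) ∉ up 1 M := by
      intro h
      obtain ⟨r, hr, e1, e2⟩ := mem_up.1 h
      omega
    rw [Finset.erase_insert hx, down_up]

end Stm

namespace Stm

/-- assemble a matching in `CF n j` from a left part `L` and middle part `Mid` -/
def comb (n j : ℕ) (L Mid : Finset (ℕ × ℕ)) : Finset (ℕ × ℕ) :=
  insert (0, j - 1) (insert (n - j, n - 1) (up 1 L ∪ refl (n - 2) L ∪ up j Mid))

lemma mem_comb {n j : ℕ} {L Mid : Finset (ℕ × ℕ)} {q : ℕ × ℕ} :
    q ∈ comb n j L Mid ↔ q = (0, j - 1) ∨ q = (n - j, n - 1) ∨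
      (∃ p ∈ L, p.1 + 1 = q.1 ∧ p.2 + 1 = q.2) ∨
      (∃ p ∈ L, n - 2 - p.2 = q.1 ∧ n - 2 - p.1 = q.2) ∨
      (∃ p ∈ Mid, p.1 + j = q.1 ∧ p.2 + j = q.2) := by
  simp only [comb, Finset.mem_insert, Finset.mem_union, mem_up, mem_refl, or_assoc]

section CFbij

variable {n j : ℕ}

/-- classification of the arcs of an element of `CF n j` -/
lemma classify (hn : 6 ≤ n) (hj3 : 3 ≤ j) (hj2 : 2 * j ≤ n)
    {M : Finset (ℕ × ℕ)} (hM : M ∈ CF n j) :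
    ((n - j, n - 1) ∈ M) ∧ ∀ p ∈ M, p = (0, j - 1) ∨ p = (n - j, n - 1) ∨
      (1 ≤ p.1 ∧ p.2 + 2 ≤ j) ∨ (j ≤ p.1 ∧ p.2 + j + 1 ≤ n) ∨
      (n - j + 1 ≤ p.1 ∧ p.2 + 2 ≤ n) := by
  rw [CF, Finset.mem_filter, mem_RF] at hM
  obtain ⟨⟨harcs, hd, hc, hs⟩, h0⟩ := hM
  have hsym : (n - j, n - 1) ∈ M := by
    have := hs _ h0
    simp only at this
    have e : (n - 1 - (j - 1), n - 1 - 0) = (n - j, n - 1) := by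
      simp only [Prod.ext_iff]; omega
    rwa [e] at this
  refine ⟨hsym, ?_⟩
  intro p hp
  by_cases hp1 : p = (0, j - 1)
  · exact Or.inl hp1
  by_cases hp2 : p = (n - j, n - 1)
  · exact Or.inr (Or.inl hp2)
  have ha := harcs p hp
  have hd1 := hd p hp _ h0 hp1
  have hd2 := hd p hp _ hsym hp2
  have hc1 := hc _ h0 p hp
  have hc2 := hc p hp _ hsym
  simp only [ne_eq] at hd1 hd2 hc1 hc2
  omega

lemma comb_bound (hn : 6 ≤ n) (hj3 : 3 ≤ j) (hj2 : 2 * j ≤ n)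
    {L Mid : Finset (ℕ × ℕ)} (hL : L ∈ SF (j - 2)) (hMid : Mid ∈ RF (n - 2 * j)) :
    ∀ q ∈ comb n j L Mid, q.1 + 2 ≤ q.2 ∧ q.2 < n := by
  have hLa := (mem_SF.1 hL).1
  have hMa := (mem_RF.1 hMid).1
  intro q hq
  rcases mem_comb.1 hq with rfl | rfl | ⟨p, hp, e1, e2⟩ | ⟨p, hp, e1, e2⟩ | ⟨p, hp, e1, e2⟩
  · simp only; omega
  · simp only; omega
  · have := hLa p hp; omega
  · have := hLa p hp; omega
  · have := hMa p hp; omega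

lemma comb_mem_CF (hn : 6 ≤ n) (hj3 : 3 ≤ j) (hj2 : 2 * j ≤ n)
    {L Mid : Finset (ℕ × ℕ)} (hL : L ∈ SF (j - 2)) (hMid : Mid ∈ RF (n - 2 * j)) :
    comb n j L Mid ∈ CF n j := by
  have hLa := (mem_SF.1 hL).1
  have hLd := (mem_SF.1 hL).2.1
  have hLc := (mem_SF.1 hL).2.2
  have hMa := (mem_RF.1 hMid).1
  have hMd := (mem_RF.1 hMid).2.1
  have hMc := (mem_RF.1 hMid).2.2.1
  have hMs := (mem_RF.1 hMid).2.2.2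
  rw [CF, Finset.mem_filter, mem_RF]
  -- bounds for each block
  have hu1 : ∀ p ∈ up 1 L, 1 ≤ p.1 ∧ p.1 + 2 ≤ p.2 ∧ p.2 + 1 ≤ j - 1 := by
    intro p hp
    obtain ⟨r, hr, e1, e2⟩ := mem_up.1 hp
    have := hLa r hr; omega
  have hu2 : ∀ p ∈ refl (n - 2) L, n - j + 1 ≤ p.1 ∧ p.1 + 2 ≤ p.2 ∧ p.2 ≤ n - 2 := by
    intro p hp
    obtain ⟨r, hr, e1, e2⟩ := mem_refl.1 hp
    have := hLa r hr; omega
  have hu3 : ∀ p ∈ up j Mid, j ≤ p.1 ∧ p.1 + 2 ≤ p.2 ∧ p.2 + j + 1 ≤ n := by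
    intro p hp
    obtain ⟨r, hr, e1, e2⟩ := mem_up.1 hp
    have := hMa r hr; omega
  -- the big union of three blocks
  set U : Finset (ℕ × ℕ) := up 1 L ∪ up j Mid ∪ refl (n - 2) L with hU
  have hUeq : up 1 L ∪ refl (n - 2) L ∪ up j Mid = U := by
    rw [hU, Finset.union_right_comm]
  have hUd : NDisj U := by
    apply sep_disj
    · intro p hp q hq
      rw [Finset.mem_union] at hp
      rcases hp with hp | hp
      · have := hu1 p hp; have := hu2 q hq; omega
      · have := hu3 p hp; have := hu2 q hq; omega
    · intro p hp
      rw [Finset.mem_union] at hp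
      rcases hp with hp | hp
      · have := hu1 p hp; omega
      · have := hu3 p hp; omega
    · intro p hp; have := hu2 p hp; omega
    · apply sep_disj
      · intro p hp q hq
        have := hu1 p hp; have := hu3 q hq; omega
      · intro p hp; have := hu1 p hp; omega
      · intro p hp; have := hu3 p hp; omega
      · exact up_disj hLd
      · exact up_disj hMd
    · exact refl_disj (fun p hp => by have := hLa p hp; omega) hLd
  have hUc : NCross U := by
    apply sep_cross
    · intro p hp q hq
      rw [Finset.mem_union] at hp
      rcases hp with hp | hp
      · have := hu1 p hp; have := hu2 q hq; omega
      · have := hu3 p hp; have := hu2 q hq; omega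
    · intro p hp
      rw [Finset.mem_union] at hp
      rcases hp with hp | hp
      · have := hu1 p hp; omega
      · have := hu3 p hp; omega
    · intro p hp; have := hu2 p hp; omega
    · apply sep_cross
      · intro p hp q hq
        have := hu1 p hp; have := hu3 q hq; omega
      · intro p hp; have := hu1 p hp; omega
      · intro p hp; have := hu3 p hp; omega
      · exact up_cross hLc
      · exact up_cross hMc
    · exact refl_cross (fun p hp => by have := hLa p hp; omega) hLc
  have hUb : ∀ p ∈ U, p.1 ≤ p.2 := by
    intro p hp
    rw [hU, Finset.mem_union, Finset.mem_union] at hp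
    rcases hp with (hp | hp) | hp
    · have := hu1 p hp; omega
    · have := hu3 p hp; omega
    · have := hu2 p hp; omega
  -- now insert the two special arcs; we do it by hand because (0, j-1) does not
  -- nest around the right blocks
  refine ⟨⟨comb_bound hn hj3 hj2 hL hMid, ?_, ?_, ?_⟩, mem_comb.2 (Or.inl rfl)⟩
  · -- NDisj
    rintro q hq q' hq' hne
    rw [comb, Finset.mem_insert, Finset.mem_insert, hUeq] at hq hq'
    have hUfacts : ∀ p ∈ U, (1 ≤ p.1 ∧ p.1 + 2 ≤ p.2 ∧ p.2 + 1 ≤ j - 1) ∨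
        (n - j + 1 ≤ p.1 ∧ p.1 + 2 ≤ p.2 ∧ p.2 ≤ n - 2) ∨
        (j ≤ p.1 ∧ p.1 + 2 ≤ p.2 ∧ p.2 + j + 1 ≤ n) := by
      intro p hp
      rw [hU, Finset.mem_union, Finset.mem_union] at hp
      rcases hp with (hp | hp) | hp
      · exact Or.inl (hu1 p hp)
      · exact Or.inr (Or.inr (hu3 p hp))
      · exact Or.inr (Or.inl (hu2 p hp))
    rcases hq with rfl | rfl | hq <;> rcases hq' with rfl | rfl | hq'
    · exact absurd rfl hne
    · simp only [ne_eq, Prod.ext_iff]; omega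
    · have := hUfacts q' hq'; simp only [ne_eq]; omega
    · simp only [ne_eq, Prod.ext_iff]; omega
    · exact absurd rfl hne
    · have := hUfacts q' hq'; simp only [ne_eq]; omega
    · have := hUfacts q hq; simp only [ne_eq]; omega
    · have := hUfacts q hq; simp only [ne_eq]; omega
    · exact hUd q hq q' hq' hne
  · -- NCross
    rintro q hq q' hq'
    rw [comb, Finset.mem_insert, Finset.mem_insert, hUeq] at hq hq'
    have hUfacts : ∀ p ∈ U, (1 ≤ p.1 ∧ p.1 + 2 ≤ p.2 ∧ p.2 + 1 ≤ j - 1) ∨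
        (n - j + 1 ≤ p.1 ∧ p.1 + 2 ≤ p.2 ∧ p.2 ≤ n - 2) ∨
        (j ≤ p.1 ∧ p.1 + 2 ≤ p.2 ∧ p.2 + j + 1 ≤ n) := by
      intro p hp
      rw [hU, Finset.mem_union, Finset.mem_union] at hp
      rcases hp with (hp | hp) | hp
      · exact Or.inl (hu1 p hp)
      · exact Or.inr (Or.inr (hu3 p hp))
      · exact Or.inr (Or.inl (hu2 p hp))
    rcases hq with rfl | rfl | hq <;> rcases hq' with rfl | rfl | hq'
    · omega
    · simp only; omega
    · have := hUfacts q' hq'; simp only; omega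
    · simp only; omega
    · omega
    · have := hUfacts q' hq'; simp only; omega
    · have := hUfacts q hq; simp only; omega
    · have := hUfacts q hq; simp only; omega
    · exact hUc q hq q' hq'
  · -- NSymm
    intro q hq
    rcases mem_comb.1 hq with rfl | rfl | ⟨p, hp, e1, e2⟩ | ⟨p, hp, e1, e2⟩ | ⟨p, hp, e1, e2⟩
    · apply mem_comb.2
      right; left
      simp only [Prod.ext_iff]; omega
    · apply mem_comb.2
      left
      simp only [Prod.ext_iff]; omega
    · apply mem_comb.2
      right; right; right; left
      refine ⟨p, hp, ?_, ?_⟩ <;> (have := hLa p hp; omega)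
    · apply mem_comb.2
      right; right; left
      refine ⟨p, hp, ?_, ?_⟩ <;> (have := hLa p hp; omega)
    · apply mem_comb.2
      right; right; right; right
      have hr := hMs p hp
      have h1 := hMa p hp
      have h2 := hMa _ hr
      exact ⟨_, hr, by omega, by omega⟩

end CFbij

end Stm

namespace Stm

def lpart (j : ℕ) (M : Finset (ℕ × ℕ)) : Finset (ℕ × ℕ) :=
  down 1 (M.filter fun p => 1 ≤ p.1 ∧ p.2 + 2 ≤ j)

def mpart (n j : ℕ) (M : Finset (ℕ × ℕ)) : Finset (ℕ × ℕ) :=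
  down j (M.filter fun p => j ≤ p.1 ∧ p.2 + j + 1 ≤ n)

lemma mem_lpart {j : ℕ} {M : Finset (ℕ × ℕ)} {q : ℕ × ℕ} :
    q ∈ lpart j M ↔ ∃ r ∈ M, (1 ≤ r.1 ∧ r.2 + 2 ≤ j) ∧ r.1 - 1 = q.1 ∧ r.2 - 1 = q.2 := by
  simp only [lpart, mem_down, Finset.mem_filter]
  constructor
  · rintro ⟨p, ⟨hp, hc⟩, e1, e2⟩; exact ⟨p, hp, hc, e1, e2⟩
  · rintro ⟨r, hr, hc, e1, e2⟩; exact ⟨r, ⟨hr, hc⟩, e1, e2⟩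

lemma mem_mpart {n j : ℕ} {M : Finset (ℕ × ℕ)} {q : ℕ × ℕ} :
    q ∈ mpart n j M ↔ ∃ r ∈ M, (j ≤ r.1 ∧ r.2 + j + 1 ≤ n) ∧ r.1 - j = q.1 ∧ r.2 - j = q.2 := by
  simp only [mpart, mem_down, Finset.mem_filter]
  constructor
  · rintro ⟨p, ⟨hp, hc⟩, e1, e2⟩; exact ⟨p, hp, hc, e1, e2⟩
  · rintro ⟨r, hr, hc, e1, e2⟩; exact ⟨r, ⟨hr, hc⟩, e1, e2⟩

section CFbij2

variable {n j : ℕ}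

lemma lpart_mem (hn : 6 ≤ n) (hj3 : 3 ≤ j) (hj2 : 2 * j ≤ n)
    {M : Finset (ℕ × ℕ)} (hM : M ∈ CF n j) : lpart j M ∈ SF (j - 2) := by
  have hM' := (Finset.mem_filter.1 hM).1
  rw [mem_RF] at hM'
  obtain ⟨harcs, hd, hc, hs⟩ := hM'
  rw [mem_SF]
  refine ⟨?_, ?_, ?_⟩
  · intro q hq
    obtain ⟨r, hr, hcnd, e1, e2⟩ := mem_lpart.1 hq
    have := harcs r hr
    omega
  · rintro q hq q' hq' hne
    obtain ⟨r, hr, hcnd, e1, e2⟩ := mem_lpart.1 hq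
    obtain ⟨r', hr', hcnd', f1, f2⟩ := mem_lpart.1 hq'
    have b1 := harcs r hr
    have b2 := harcs r' hr'
    rcases eq_or_ne r r' with rfl | hrr
    · exact absurd (Prod.ext (by omega) (by omega)) hne
    · have := hd r hr r' hr' hrr
      simp only [ne_eq] at this ⊢
      omega
  · rintro q hq q' hq'
    obtain ⟨r, hr, hcnd, e1, e2⟩ := mem_lpart.1 hq
    obtain ⟨r', hr', hcnd', f1, f2⟩ := mem_lpart.1 hq'
    have b1 := harcs r hr
    have b2 := harcs r' hr'
    have := hc r hr r' hr'
    omega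

lemma mpart_mem (hn : 6 ≤ n) (hj3 : 3 ≤ j) (hj2 : 2 * j ≤ n)
    {M : Finset (ℕ × ℕ)} (hM : M ∈ CF n j) : mpart n j M ∈ RF (n - 2 * j) := by
  have hM' := (Finset.mem_filter.1 hM).1
  rw [mem_RF] at hM'
  obtain ⟨harcs, hd, hc, hs⟩ := hM'
  rw [mem_RF]
  refine ⟨?_, ?_, ?_, ?_⟩
  · intro q hq
    obtain ⟨r, hr, hcnd, e1, e2⟩ := mem_mpart.1 hq
    have := harcs r hr
    omega
  · rintro q hq q' hq' hne
    obtain ⟨r, hr, hcnd, e1, e2⟩ := mem_mpart.1 hq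
    obtain ⟨r', hr', hcnd', f1, f2⟩ := mem_mpart.1 hq'
    have b1 := harcs r hr
    have b2 := harcs r' hr'
    rcases eq_or_ne r r' with rfl | hrr
    · exact absurd (Prod.ext (by omega) (by omega)) hne
    · have := hd r hr r' hr' hrr
      simp only [ne_eq] at this ⊢
      omega
  · rintro q hq q' hq'
    obtain ⟨r, hr, hcnd, e1, e2⟩ := mem_mpart.1 hq
    obtain ⟨r', hr', hcnd', f1, f2⟩ := mem_mpart.1 hq'
    have b1 := harcs r hr
    have b2 := harcs r' hr'
    have := hc r hr r' hr'
    omega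
  · intro q hq
    obtain ⟨r, hr, hcnd, e1, e2⟩ := mem_mpart.1 hq
    have b1 := harcs r hr
    have hrs := hs r hr
    have b2 := harcs _ hrs
    apply mem_mpart.2
    refine ⟨(n - 1 - r.2, n - 1 - r.1), hrs, ⟨by omega, by omega⟩, by omega, by omega⟩

lemma lpart_comb (hn : 6 ≤ n) (hj3 : 3 ≤ j) (hj2 : 2 * j ≤ n)
    {L Mid : Finset (ℕ × ℕ)} (hL : L ∈ SF (j - 2)) (hMid : Mid ∈ RF (n - 2 * j)) :
    lpart j (comb n j L Mid) = L := by
  have hLa := (mem_SF.1 hL).1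
  have hMa := (mem_RF.1 hMid).1
  have key : (comb n j L Mid).filter (fun p => 1 ≤ p.1 ∧ p.2 + 2 ≤ j) = up 1 L := by
    ext q
    rw [Finset.mem_filter, mem_comb, mem_up]
    constructor
    · rintro ⟨rfl | rfl | ⟨p, hp, e1, e2⟩ | ⟨p, hp, e1, e2⟩ | ⟨p, hp, e1, e2⟩, hcnd⟩
      · exfalso; simp only at hcnd; omega
      · exfalso; simp only at hcnd; omega
      · exact ⟨p, hp, e1, e2⟩
      · exfalso; have := hLa p hp; omega
      · exfalso; have := hMa p hp; omega
    · rintro ⟨p, hp, e1, e2⟩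
      have := hLa p hp
      exact ⟨Or.inr (Or.inr (Or.inl ⟨p, hp, e1, e2⟩)), by omega⟩
  rw [lpart, key, down_up]

lemma mpart_comb (hn : 6 ≤ n) (hj3 : 3 ≤ j) (hj2 : 2 * j ≤ n)
    {L Mid : Finset (ℕ × ℕ)} (hL : L ∈ SF (j - 2)) (hMid : Mid ∈ RF (n - 2 * j)) :
    mpart n j (comb n j L Mid) = Mid := by
  have hLa := (mem_SF.1 hL).1
  have hMa := (mem_RF.1 hMid).1
  have key : (comb n j L Mid).filter (fun p => j ≤ p.1 ∧ p.2 + j + 1 ≤ n) = up j Mid := by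
    ext q
    rw [Finset.mem_filter, mem_comb, mem_up]
    constructor
    · rintro ⟨rfl | rfl | ⟨p, hp, e1, e2⟩ | ⟨p, hp, e1, e2⟩ | ⟨p, hp, e1, e2⟩, hcnd⟩
      · exfalso; simp only at hcnd; omega
      · exfalso; simp only at hcnd; omega
      · exfalso; have := hLa p hp; omega
      · exfalso; have := hLa p hp; omega
      · exact ⟨p, hp, e1, e2⟩
    · rintro ⟨p, hp, e1, e2⟩
      have := hMa p hp
      exact ⟨Or.inr (Or.inr (Or.inr (Or.inr ⟨p, hp, e1, e2⟩))), by omega⟩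
  rw [mpart, key, down_up]

lemma comb_parts (hn : 6 ≤ n) (hj3 : 3 ≤ j) (hj2 : 2 * j ≤ n)
    {M : Finset (ℕ × ℕ)} (hM : M ∈ CF n j) :
    comb n j (lpart j M) (mpart n j M) = M := by
  obtain ⟨hsym, hclass⟩ := classify hn hj3 hj2 hM
  have h0 : (0, j - 1) ∈ M := (Finset.mem_filter.1 hM).2
  have hM' := (Finset.mem_filter.1 hM).1
  rw [mem_RF] at hM'
  obtain ⟨harcs, hd, hc, hs⟩ := hM'
  ext q
  rw [mem_comb]
  constructor
  · rintro (rfl | rfl | ⟨p, hp, e1, e2⟩ | ⟨p, hp, e1, e2⟩ | ⟨p, hp, e1, e2⟩)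
    · exact h0
    · exact hsym
    · obtain ⟨r, hr, hcnd, f1, f2⟩ := mem_lpart.1 hp
      have := harcs r hr
      have : q = r := Prod.ext (by omega) (by omega)
      rw [this]; exact hr
    · obtain ⟨r, hr, hcnd, f1, f2⟩ := mem_lpart.1 hp
      have hb := harcs r hr
      have hrs := hs r hr
      have : q = (n - 1 - r.2, n - 1 - r.1) := Prod.ext (by omega) (by omega)
      rw [this]; exact hrs
    · obtain ⟨r, hr, hcnd, f1, f2⟩ := mem_mpart.1 hp
      have := harcs r hr
      have : q = r := Prod.ext (by omega) (by omega)
      rw [this]; exact hr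
  · intro hq
    have hb := harcs q hq
    rcases hclass q hq with rfl | rfl | hcse | hcse | hcse
    · exact Or.inl rfl
    · exact Or.inr (Or.inl rfl)
    · refine Or.inr (Or.inr (Or.inl ⟨(q.1 - 1, q.2 - 1), ?_, by omega, by omega⟩))
      exact mem_lpart.2 ⟨q, hq, by omega, rfl, rfl⟩
    · refine Or.inr (Or.inr (Or.inr (Or.inr ⟨(q.1 - j, q.2 - j), ?_, by omega, by omega⟩)))
      exact mem_mpart.2 ⟨q, hq, by omega, rfl, rfl⟩
    · refine Or.inr (Or.inr (Or.inr (Or.inl ?_)))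
      have hrs := hs q hq
      have hb2 := harcs _ hrs
      refine ⟨(n - 1 - q.2 - 1, n - 1 - q.1 - 1), ?_, by simp only; omega, by simp only; omega⟩
      exact mem_lpart.2 ⟨(n - 1 - q.2, n - 1 - q.1), hrs, by simp only; omega, rfl, rfl⟩

lemma card_CF (hn : 6 ≤ n) (hj3 : 3 ≤ j) (hj2 : 2 * j ≤ n) :
    (CF n j).card = (SF (j - 2)).card * (RF (n - 2 * j)).card := by
  rw [← Finset.card_product]
  symm
  apply Finset.card_bij' (fun P _ => comb n j P.1 P.2)
      (fun M _ => (lpart j M, mpart n j M))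
  · intro P hP
    rw [Finset.mem_product] at hP
    exact comb_mem_CF hn hj3 hj2 hP.1 hP.2
  · intro M hM
    rw [Finset.mem_product]
    exact ⟨lpart_mem hn hj3 hj2 hM, mpart_mem hn hj3 hj2 hM⟩
  · intro P hP
    rw [Finset.mem_product] at hP
    exact Prod.ext (lpart_comb hn hj3 hj2 hP.1 hP.2) (mpart_comb hn hj3 hj2 hP.1 hP.2)
  · intro M hM
    exact comb_parts hn hj3 hj2 hM

end CFbij2

end Stm

namespace Stm

lemma RF_cover {n : ℕ} (hn : 6 ≤ n) :
    RF n = (AF n ∪ BF n) ∪ (Finset.Icc 3 (n / 2)).biUnion (CF n ·) := by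
  ext M
  simp only [Finset.mem_union, Finset.mem_biUnion]
  constructor
  · intro hM
    obtain ⟨harcs, hd, hc, hs⟩ := mem_RF.1 hM
    by_cases h0 : ∀ p ∈ M, p.1 ≠ 0
    · exact Or.inl (Or.inl (Finset.mem_filter.2 ⟨hM, h0⟩))
    · push_neg at h0
      obtain ⟨p, hp, hp0⟩ := h0
      have hb := harcs p hp
      by_cases hk : p.2 = n - 1
      · refine Or.inl (Or.inr (Finset.mem_filter.2 ⟨hM, ?_⟩))
        have : (0, n - 1) = p := Prod.ext (by omega) (by omega)
        rw [this]; exact hp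
      · refine Or.inr ⟨p.2 + 1, ?_, Finset.mem_filter.2 ⟨hM, ?_⟩⟩
        · have hrs := hs p hp
          have hne : p ≠ (n - 1 - p.2, n - 1 - p.1) := by
            intro h
            have := congrArg Prod.snd h
            simp only at this
            omega
          have hdd := hd p hp _ hrs hne
          have hcc := hc p hp _ hrs
          simp only [ne_eq] at hdd hcc
          rw [Finset.mem_Icc]
          omega
        · have : (0, p.2 + 1 - 1) = p := Prod.ext (by omega) (by omega)
          rw [this]; exact hp
  · rintro ((hM | hM) | ⟨j, _, hM⟩) <;> exact (Finset.mem_filter.1 hM).1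

lemma RF_card {n : ℕ} (hn : 6 ≤ n) :
    (RF n).card = ((AF n).card + (BF n).card) +
      ∑ j ∈ Finset.Icc 3 (n / 2), (CF n j).card := by
  rw [RF_cover hn]
  rw [Finset.card_union_of_disjoint, Finset.card_union_of_disjoint, Finset.card_biUnion]
  · -- pairwise disjoint CF
    intro x hx y hy hxy
    rw [Finset.mem_coe, Finset.mem_Icc] at hx hy
    rw [Function.onFun, Finset.disjoint_left]
    intro M hMx hMy
    have h1 := (Finset.mem_filter.1 hMx).2
    have h2 := (Finset.mem_filter.1 hMy).2
    have hM := (Finset.mem_filter.1 hMx).1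
    obtain ⟨harcs, hd, hc, hs⟩ := mem_RF.1 hM
    have hne : (0, x - 1) ≠ ((0, y - 1) : ℕ × ℕ) := by
      intro h
      have := congrArg Prod.snd h
      simp only at this
      omega
    exact absurd rfl (hd _ h1 _ h2 hne).1
  · -- AF disjoint BF
    rw [Finset.disjoint_left]
    intro M hMa hMb
    have h1 := (Finset.mem_filter.1 hMa).2
    have h2 := (Finset.mem_filter.1 hMb).2
    exact h1 _ h2 rfl
  · -- (AF ∪ BF) disjoint biUnion
    rw [Finset.disjoint_left]
    intro M hMab hMc
    rw [Finset.mem_biUnion] at hMc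
    obtain ⟨j, hj, hMj⟩ := hMc
    rw [Finset.mem_Icc] at hj
    have h2 := (Finset.mem_filter.1 hMj).2
    rcases Finset.mem_union.1 hMab with hMa | hMb
    · have h1 := (Finset.mem_filter.1 hMa).2
      exact h1 _ h2 rfl
    · have h1 := (Finset.mem_filter.1 hMb).2
      have hM := (Finset.mem_filter.1 hMb).1
      obtain ⟨harcs, hd, hc, hs⟩ := mem_RF.1 hM
      have hne : (0, n - 1) ≠ ((0, j - 1) : ℕ × ℕ) := by
        intro h
        have := congrArg Prod.snd h
        simp only at this
        omega
      exact absurd rfl (hd _ h1 _ h2 hne).1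

lemma main_rec {n : ℕ} (hn : 6 ≤ n) :
    R n = 2 * R (n - 2) + ∑ j ∈ Finset.Icc 3 (n / 2), S (j - 2) * R (n - 2 * j) := by
  rw [R_eq n, RF_card hn, card_AF hn, card_BF hn]
  have hsum : ∑ j ∈ Finset.Icc 3 (n / 2), (CF n j).card
      = ∑ j ∈ Finset.Icc 3 (n / 2), S (j - 2) * R (n - 2 * j) := by
    apply Finset.sum_congr rfl
    intro j hj
    rw [Finset.mem_Icc] at hj
    rw [card_CF hn hj.1 (by omega), S_eq, R_eq]
  rw [hsum, R_eq (n - 2)]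
  ring

end Stm


theorem statement1 :
    R 0 = 1 ∧ R 1 = 1 ∧ R 2 = 1 ∧ R 3 = 2 ∧ R 4 = 2 ∧ R 5 = 4 ∧
    ∀ n, 6 ≤ n →
      R n = 2 * R (n - 2) + ∑ j ∈ Finset.Icc 3 (n / 2), S (j - 2) * R (n - 2 * j) := by
  refine ⟨?_, ?_, ?_, ?_, ?_, ?_, fun n hn => Stm.main_rec hn⟩ <;>
    rw [Stm.R_eq] <;> decide
end

section
/- With R n the number of symmetric noncrossing partial matchings on n points with no arc between adjacent points (symmetric under i ↦ n+1-i), for all n ≥ 1: R (2n+1) = R (2n) + R (2n-1). -/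
/-!
In a symmetric matching on `2m+3` points the centre `m+1` is a fixed point of the reflection,
so it is never matched. If the arc `(m, m+2)` is absent, deleting the centre is a bijection
onto the matchings on `2m+2` points: it shortens only the arcs passing over the centre, and only
`(m, m+2)` would become an arc between adjacent points. If that arc is present, it keeps every
other arc away from the centre and its two neighbours, and deleting its two endpoints is a
bijection onto the matchings on `2m+1` points.
-/

def IsSymmNCMatching (n : ℕ) (M : Finset (Fin n × Fin n)) : Prop :=
  IsMatching n M ∧ Noncrossing n M ∧ SymmMatching n M

lemma R_eq_ncard (n : ℕ) : R n = {M | IsSymmNCMatching n M}.ncard :=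
  Nat.card_coe_set_eq _

section Basic

variable {n : ℕ} {M N : Finset (Fin n × Fin n)}

lemma IsMatching.mono (h : IsMatching n M) (hNM : N ⊆ M) : IsMatching n N :=
  ⟨fun p hp => h.1 p (hNM hp), fun p hp q hq => h.2 p (hNM hp) q (hNM hq)⟩

lemma Noncrossing.mono (h : Noncrossing n M) (hNM : N ⊆ M) : Noncrossing n N :=
  fun p hp q hq => h p (hNM hp) q (hNM hq)

lemma SymmMatching.erase (h : SymmMatching n M) {p : Fin n × Fin n}
    (hp : (p.2.rev, p.1.rev) = p) : SymmMatching n (M.erase p) := by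
  intro q hq
  obtain ⟨hqp, hqM⟩ := Finset.mem_erase.mp hq
  refine Finset.mem_erase.mpr ⟨fun h => hqp ?_, h q hqM⟩
  rw [← hp, ← h]
  simp

lemma IsMatching.val_ne_of_two_mul_add_one_eq (h : IsMatching n M) (hs : SymmMatching n M)
    {c : ℕ} (hc : 2 * c + 1 = n) {p : Fin n × Fin n} (hp : p ∈ M) :
    p.1.val ≠ c ∧ p.2.val ≠ c := by
  have hgap := h.1 p hp
  have h1 := Fin.val_rev p.1
  have h2 := Fin.val_rev p.2
  by_cases hpq : p = (p.2.rev, p.1.rev)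
  · have := congrArg (·.1.val) hpq
    simp only at this
    omega
  · have hd := h.2 p hp _ (hs p hp) hpq
    simp only [ne_eq, Fin.ext_iff] at hd
    omega

end Basic

lemma Finset.exists_image_prodMap_eq {α β : Type*} [DecidableEq β] (f : α → β)
    {M' : Finset (β × β)} (h : ∀ p ∈ M', p.1 ∈ Set.range f ∧ p.2 ∈ Set.range f) :
    ∃ M : Finset (α × α), M.image (Prod.map f f) = M' := by
  have : (M' : Set (β × β)) ⊆ Prod.map f f '' Set.univ := by
    rw [Set.image_univ, Set.range_prodMap]
    exact fun p hp => h p hp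
  obtain ⟨M, -, hM⟩ := Finset.subset_set_image_iff.mp this
  exact ⟨M, hM⟩

section Image

variable {a b : ℕ} {f : Fin a → Fin b} {M : Finset (Fin a × Fin a)}

lemma isMatching_image_iff (hf : Function.Injective f)
    (hgap : ∀ p ∈ M, p.1.val + 2 ≤ p.2.val ↔ (f p.1).val + 2 ≤ (f p.2).val) :
    IsMatching b (M.image (Prod.map f f)) ↔ IsMatching a M := by
  simp only [IsMatching, Finset.forall_mem_image, ne_eq, Prod.map, Prod.mk.injEq, hf.eq_iff]
  refine and_congr (forall₂_congr fun p hp => (hgap p hp).symm) ?_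
  simp only [← Prod.mk.injEq, Prod.mk.eta]

lemma noncrossing_image_iff (hf : StrictMono f) :
    Noncrossing b (M.image (Prod.map f f)) ↔ Noncrossing a M := by
  simp only [Noncrossing, Finset.forall_mem_image, Prod.map_fst, Prod.map_snd, hf.lt_iff_lt]

lemma symmMatching_image_iff (hf : Function.Injective f) (hrev : ∀ i, f i.rev = (f i).rev) :
    SymmMatching b (M.image (Prod.map f f)) ↔ SymmMatching a M := by
  simp only [SymmMatching, Finset.forall_mem_image, Prod.map_fst, Prod.map_snd, ← hrev]
  refine forall₂_congr fun p _ => ?_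
  exact (hf.prodMap hf).mem_finset_image (a := (p.2.rev, p.1.rev))

lemma isSymmNCMatching_image_iff (hf : StrictMono f) (hrev : ∀ i, f i.rev = (f i).rev)
    (hgap : ∀ p ∈ M, p.1.val + 2 ≤ p.2.val ↔ (f p.1).val + 2 ≤ (f p.2).val) :
    IsSymmNCMatching b (M.image (Prod.map f f)) ↔ IsSymmNCMatching a M :=
  and_congr (isMatching_image_iff hf.injective hgap) <|
    and_congr (noncrossing_image_iff hf) (symmMatching_image_iff hf.injective hrev)

end Image

namespace SymmNCMatching

variable (m : ℕ)

def innerArc : Fin (2 * m + 3) × Fin (2 * m + 3) := (⟨m, by omega⟩, ⟨m + 2, by omega⟩)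

def skipCenter (i : Fin (2 * m + 2)) : Fin (2 * m + 3) :=
  ⟨if i.val ≤ m then i.val else i.val + 1, by split <;> omega⟩

def skipInnerArc (i : Fin (2 * m + 1)) : Fin (2 * m + 3) :=
  ⟨if i.val < m then i.val else if i.val = m then m + 1 else i.val + 2, by split_ifs <;> omega⟩

variable {m}

lemma innerArc_rev : ((innerArc m).2.rev, (innerArc m).1.rev) = innerArc m := by
  ext <;> simp only [innerArc, Fin.val_rev] <;> omega

lemma skipCenter_strictMono : StrictMono (skipCenter m) := by
  intro i j hij
  simp only [Fin.lt_def, skipCenter] at hij ⊢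
  split_ifs <;> omega

lemma skipCenter_rev (i : Fin (2 * m + 2)) : skipCenter m i.rev = (skipCenter m i).rev := by
  ext; simp only [skipCenter, Fin.val_rev]; split_ifs <;> omega

lemma mem_range_skipCenter {k : Fin (2 * m + 3)} (hk : k.val ≠ m + 1) :
    k ∈ Set.range (skipCenter m) :=
  ⟨⟨if k.val ≤ m then k.val else k.val - 1, by split <;> omega⟩, by
    ext; simp only [skipCenter]; split_ifs <;> omega⟩

lemma skipCenter_pair_eq_innerArc_iff (i j : Fin (2 * m + 2)) :
    (skipCenter m i, skipCenter m j) = innerArc m ↔ i.val = m ∧ j.val = m + 1 := by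
  simp only [innerArc, Prod.mk.injEq, Fin.ext_iff, skipCenter]
  split_ifs <;> omega

lemma skipCenter_gap_iff {i j : Fin (2 * m + 2)} (h : ¬(i.val = m ∧ j.val = m + 1)) :
    i.val + 2 ≤ j.val ↔ (skipCenter m i).val + 2 ≤ (skipCenter m j).val := by
  simp only [skipCenter]
  split_ifs <;> omega

lemma skipInnerArc_strictMono : StrictMono (skipInnerArc m) := by
  intro i j hij
  simp only [Fin.lt_def, skipInnerArc] at hij ⊢
  split_ifs <;> omega

lemma skipInnerArc_rev (i : Fin (2 * m + 1)) : skipInnerArc m i.rev = (skipInnerArc m i).rev := by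
  ext; simp only [skipInnerArc, Fin.val_rev]; split_ifs <;> omega

lemma mem_range_skipInnerArc {k : Fin (2 * m + 3)} (hk : k.val < m ∨ m + 2 < k.val) :
    k ∈ Set.range (skipInnerArc m) :=
  ⟨⟨if k.val < m then k.val else k.val - 2, by split_ifs <;> omega⟩,
    by ext; simp only [skipInnerArc]; split_ifs <;> omega⟩

lemma skipInnerArc_val_ne (i : Fin (2 * m + 1)) : (skipInnerArc m i).val ≠ m := by
  simp only [skipInnerArc]; split_ifs <;> omega

lemma skipInnerArc_val_avoids_iff (i : Fin (2 * m + 1)) :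
    (skipInnerArc m i).val < m ∨ m + 2 < (skipInnerArc m i).val ↔ i.val ≠ m := by
  simp only [skipInnerArc]; split_ifs <;> omega

lemma skipInnerArc_gap_iff {i j : Fin (2 * m + 1)} (hi : i.val ≠ m) (hj : j.val ≠ m) :
    i.val + 2 ≤ j.val ↔ (skipInnerArc m i).val + 2 ≤ (skipInnerArc m j).val := by
  simp only [skipInnerArc]; split_ifs <;> omega

lemma isSymmNCMatching_insert_innerArc {N : Finset (Fin (2 * m + 3) × Fin (2 * m + 3))}
    (hN : IsSymmNCMatching (2 * m + 3) N)
    (havoid : ∀ p ∈ N, (p.1.val < m ∨ m + 2 < p.1.val) ∧ (p.2.val < m ∨ m + 2 < p.2.val)) :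
    IsSymmNCMatching (2 * m + 3) (insert (innerArc m) N) := by
  obtain ⟨⟨hgap, hdisj⟩, hnc, hsymm⟩ := hN
  refine ⟨⟨?_, ?_⟩, ?_, ?_⟩
  · rw [Finset.forall_mem_insert]
    exact ⟨le_refl _, hgap⟩
  · intro p hp q hq hpq
    rcases Finset.mem_insert.mp hp with rfl | hp <;> rcases Finset.mem_insert.mp hq with rfl | hq
    · exact absurd rfl hpq
    · have := havoid q hq
      simp only [innerArc, ne_eq, Fin.ext_iff]
      omega
    · have := havoid p hp
      simp only [innerArc, ne_eq, Fin.ext_iff]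
      omega
    · exact hdisj p hp q hq hpq
  · intro p hp q hq
    rcases Finset.mem_insert.mp hp with rfl | hp <;> rcases Finset.mem_insert.mp hq with rfl | hq
    · exact fun h => lt_irrefl _ h.1
    · have := havoid q hq
      simp only [innerArc, Fin.lt_def]
      omega
    · have := havoid p hp
      simp only [innerArc, Fin.lt_def]
      omega
    · exact hnc p hp q hq
  · intro p hp
    rcases Finset.mem_insert.mp hp with rfl | hp
    · rw [innerArc_rev]
      exact Finset.mem_insert_self _ _
    · exact Finset.mem_insert_of_mem (hsymm p hp)

lemma image_skipCenter :
    (fun M => M.image (Prod.map (skipCenter m) (skipCenter m))) ''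
        {M | IsSymmNCMatching (2 * m + 2) M} =
      {M' | IsSymmNCMatching (2 * m + 3) M'} \ {M' | innerArc m ∈ M'} := by
  ext M'
  simp only [Set.mem_image, Set.mem_ofPred_eq, Set.mem_sdiff]
  constructor
  · rintro ⟨M, hM, rfl⟩
    refine ⟨(isSymmNCMatching_image_iff skipCenter_strictMono skipCenter_rev fun p hp =>
      skipCenter_gap_iff fun h => ?_).mpr hM, fun hmem => ?_⟩
    · have := hM.1.1 p hp
      omega
    · obtain ⟨p, hp, he⟩ := Finset.mem_image.mp hmem
      have := (skipCenter_pair_eq_innerArc_iff p.1 p.2).mp he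
      have := hM.1.1 p hp
      omega
  · rintro ⟨hM', hin⟩
    obtain ⟨M, rfl⟩ := Finset.exists_image_prodMap_eq (skipCenter m) fun p hp =>
      ⟨mem_range_skipCenter (hM'.1.val_ne_of_two_mul_add_one_eq hM'.2.2 rfl hp).1,
        mem_range_skipCenter (hM'.1.val_ne_of_two_mul_add_one_eq hM'.2.2 rfl hp).2⟩
    refine ⟨M, (isSymmNCMatching_image_iff skipCenter_strictMono skipCenter_rev fun p hp =>
      skipCenter_gap_iff fun h => hin ?_).mp hM', rfl⟩
    rw [← (skipCenter_pair_eq_innerArc_iff p.1 p.2).mpr h]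
    exact Finset.mem_image_of_mem _ hp

lemma image_insert_innerArc_skipInnerArc :
    (fun M => insert (innerArc m) (M.image (Prod.map (skipInnerArc m) (skipInnerArc m)))) ''
        {M | IsSymmNCMatching (2 * m + 1) M} =
      {M' | IsSymmNCMatching (2 * m + 3) M'} ∩ {M' | innerArc m ∈ M'} := by
  ext M'
  simp only [Set.mem_image, Set.mem_ofPred_eq, Set.mem_inter_iff]
  constructor
  · rintro ⟨M, hM, rfl⟩
    have hcenter := fun p (hp : p ∈ M) => hM.1.val_ne_of_two_mul_add_one_eq hM.2.2 rfl hp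
    have himage := (isSymmNCMatching_image_iff skipInnerArc_strictMono skipInnerArc_rev fun p hp =>
      skipInnerArc_gap_iff (hcenter p hp).1 (hcenter p hp).2).mpr hM
    refine ⟨isSymmNCMatching_insert_innerArc himage ?_, Finset.mem_insert_self _ _⟩
    rw [Finset.forall_mem_image]
    exact fun p hp => ⟨(skipInnerArc_val_avoids_iff p.1).mpr (hcenter p hp).1,
      (skipInnerArc_val_avoids_iff p.2).mpr (hcenter p hp).2⟩
  · rintro ⟨hM', hin⟩
    have hN : IsSymmNCMatching (2 * m + 3) (M'.erase (innerArc m)) :=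
      ⟨hM'.1.mono (Finset.erase_subset _ _), hM'.2.1.mono (Finset.erase_subset _ _),
        hM'.2.2.erase innerArc_rev⟩
    -- the centre is free, and its two neighbours are taken by the inner arc
    have havoid : ∀ p ∈ M'.erase (innerArc m),
        (p.1.val < m ∨ m + 2 < p.1.val) ∧ (p.2.val < m ∨ m + 2 < p.2.val) := by
      intro p hp
      obtain ⟨hne, hp⟩ := Finset.mem_erase.mp hp
      have hc := hM'.1.val_ne_of_two_mul_add_one_eq hM'.2.2 (c := m + 1) (by ring) hp
      have hd := hM'.1.2 p hp _ hin hne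
      simp only [innerArc, ne_eq, Fin.ext_iff] at hd
      omega
    obtain ⟨M, hM⟩ := Finset.exists_image_prodMap_eq (skipInnerArc m) fun p hp =>
      ⟨mem_range_skipInnerArc (havoid p hp).1, mem_range_skipInnerArc (havoid p hp).2⟩
    have hgap : ∀ p ∈ M, p.1.val + 2 ≤ p.2.val ↔
        (skipInnerArc m p.1).val + 2 ≤ (skipInnerArc m p.2).val := by
      intro p hp
      have := havoid _
        (hM ▸ Finset.mem_image_of_mem (Prod.map (skipInnerArc m) (skipInnerArc m)) hp)
      exact skipInnerArc_gap_iff ((skipInnerArc_val_avoids_iff p.1).mp this.1)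
        ((skipInnerArc_val_avoids_iff p.2).mp this.2)
    refine ⟨M, (isSymmNCMatching_image_iff skipInnerArc_strictMono skipInnerArc_rev hgap).mp
      (hM ▸ hN), by rw [hM, Finset.insert_erase hin]⟩

lemma injective_image_skipCenter :
    Function.Injective fun M : Finset (Fin (2 * m + 2) × Fin (2 * m + 2)) =>
      M.image (Prod.map (skipCenter m) (skipCenter m)) :=
  Finset.image_injective (skipCenter_strictMono.injective.prodMap skipCenter_strictMono.injective)

lemma injective_insert_innerArc_image_skipInnerArc :
    Function.Injective fun M : Finset (Fin (2 * m + 1) × Fin (2 * m + 1)) =>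
      insert (innerArc m) (M.image (Prod.map (skipInnerArc m) (skipInnerArc m))) := by
  have hnot (M : Finset (Fin (2 * m + 1) × Fin (2 * m + 1))) :
      innerArc m ∉ M.image (Prod.map (skipInnerArc m) (skipInnerArc m)) := by
    intro hmem
    obtain ⟨p, -, he⟩ := Finset.mem_image.mp hmem
    exact skipInnerArc_val_ne p.1 (congrArg (·.1.val) he)
  intro M₁ M₂ h
  have := congrArg (Finset.erase · (innerArc m)) h
  simp only [Finset.erase_insert (hnot _)] at this
  exact Finset.image_injective
    (skipInnerArc_strictMono.injective.prodMap skipInnerArc_strictMono.injective) this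

theorem R_two_mul_add_three (m : ℕ) : R (2 * m + 3) = R (2 * m + 2) + R (2 * m + 1) := by
  rw [R_eq_ncard, R_eq_ncard, R_eq_ncard,
    ← Set.ncard_inter_add_ncard_sdiff_eq_ncard _ {M' | innerArc m ∈ M'},
    ← image_skipCenter, ← image_insert_innerArc_skipInnerArc,
    Set.ncard_image_of_injective _ injective_image_skipCenter,
    Set.ncard_image_of_injective _ injective_insert_innerArc_image_skipInnerArc, add_comm]

end SymmNCMatching

theorem statement2 : ∀ n : ℕ, 1 ≤ n → R (2 * n + 1) = R (2 * n) + R (2 * n - 1) := by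
  intro n hn
  obtain ⟨m, rfl⟩ := Nat.exists_eq_add_of_le' hn
  have h := SymmNCMatching.R_two_mul_add_three m
  rwa [show 2 * m + 3 = 2 * (m + 1) + 1 by ring, show 2 * m + 2 = 2 * (m + 1) by ring,
    show 2 * m + 1 = 2 * (m + 1) - 1 by omega] at h
end

section
/- With R n the number of symmetric noncrossing partial matchings on n points with no arc between adjacent points, and S n the number of all noncrossing partial matchings on n points with no arc between adjacent points, for all n ≥ 1: R (2n) = R (2n-1) + R (2n-2) - S (n-1). -/
/-! ### ℕ-world encoding -/

def NGood (m : ℕ) (M : Finset (ℕ × ℕ)) : Prop :=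
  (∀ p ∈ M, p.1 + 2 ≤ p.2 ∧ p.2 < m) ∧
  (∀ p ∈ M, ∀ q ∈ M, p ≠ q → p.1 ≠ q.1 ∧ p.1 ≠ q.2 ∧ p.2 ≠ q.1 ∧ p.2 ≠ q.2) ∧
  (∀ p ∈ M, ∀ q ∈ M, ¬(p.1 < q.1 ∧ q.1 < p.2 ∧ p.2 < q.2))

def NSym (m : ℕ) (M : Finset (ℕ × ℕ)) : Prop :=
  ∀ p ∈ M, (m - 1 - p.2, m - 1 - p.1) ∈ M

def arcsN {m : ℕ} (M : Finset (Fin m × Fin m)) : Finset (ℕ × ℕ) :=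
  M.map ⟨fun p => (p.1.val, p.2.val), by
    rintro ⟨a, b⟩ ⟨c, d⟩ h
    simp only [Prod.mk.injEq] at h
    exact Prod.ext (Fin.ext h.1) (Fin.ext h.2)⟩

lemma mem_toNat {m : ℕ} {M : Finset (Fin m × Fin m)} {q : ℕ × ℕ} :
    q ∈ arcsN M ↔ ∃ p ∈ M, (p.1.val, p.2.val) = q := by
  simp [arcsN]
  exact Iff.rfl

def arcsF (m : ℕ) (N : Finset (ℕ × ℕ)) : Finset (Fin m × Fin m) :=
  ((N.filter fun p => p.1 < m ∧ p.2 < m).attach).map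
    ⟨fun q => (⟨q.1.1, ((Finset.mem_filter.mp q.2).2).1⟩, ⟨q.1.2, ((Finset.mem_filter.mp q.2).2).2⟩),
     by
      rintro ⟨⟨a, b⟩, hq⟩ ⟨⟨c, d⟩, hq'⟩ h
      simp only [Prod.mk.injEq, Fin.mk.injEq] at h
      exact Subtype.ext (by simp [h.1, h.2])⟩

lemma mem_toFin {m : ℕ} {N : Finset (ℕ × ℕ)} {p : Fin m × Fin m} :
    p ∈ arcsF m N ↔ (p.1.val, p.2.val) ∈ N := by
  constructor
  · intro h
    simp only [arcsF, Finset.mem_map, Finset.mem_attach, true_and, Function.Embedding.coeFn_mk] at h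
    obtain ⟨⟨⟨a, b⟩, hq⟩, h⟩ := h
    subst h
    exact (Finset.mem_filter.mp hq).1
  · intro h
    simp only [arcsF, Finset.mem_map, Finset.mem_attach, true_and, Function.Embedding.coeFn_mk]
    refine ⟨⟨(p.1.val, p.2.val), Finset.mem_filter.mpr ⟨h, p.1.isLt, p.2.isLt⟩⟩, ?_⟩
    rfl

lemma toFin_toNat {m : ℕ} (M : Finset (Fin m × Fin m)) : arcsF m (arcsN M) = M := by
  ext p
  rw [mem_toFin, mem_toNat]
  constructor
  · rintro ⟨q, hq, h⟩
    have : q = p := by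
      simp only [Prod.mk.injEq] at h
      exact Prod.ext (Fin.ext h.1) (Fin.ext h.2)
    exact this ▸ hq
  · intro h; exact ⟨p, h, rfl⟩

lemma toNat_toFin {m : ℕ} {N : Finset (ℕ × ℕ)} (hN : ∀ p ∈ N, p.1 < m ∧ p.2 < m) :
    arcsN (arcsF m N) = N := by
  ext q
  rw [mem_toNat]
  constructor
  · rintro ⟨p, hp, h⟩
    exact h ▸ mem_toFin.mp hp
  · intro h
    exact ⟨(⟨q.1, (hN q h).1⟩, ⟨q.2, (hN q h).2⟩), mem_toFin.mpr h, rfl⟩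

lemma good_iff {m : ℕ} (M : Finset (Fin m × Fin m)) :
    (IsMatching m M ∧ Noncrossing m M) ↔ NGood m (arcsN M) := by
  constructor
  · rintro ⟨⟨h1, h2⟩, h3⟩
    refine ⟨?_, ?_, ?_⟩
    · rintro q hq
      obtain ⟨p, hp, rfl⟩ := mem_toNat.mp hq
      exact ⟨h1 p hp, p.2.isLt⟩
    · rintro q hq q' hq' hne
      obtain ⟨p, hp, rfl⟩ := mem_toNat.mp hq
      obtain ⟨p', hp', rfl⟩ := mem_toNat.mp hq'
      have hpp : p ≠ p' := by rintro rfl; exact hne rfl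
      have := h2 p hp p' hp' hpp
      simp only [ne_eq, Fin.ext_iff] at this ⊢
      exact this
    · rintro q hq q' hq'
      obtain ⟨p, hp, rfl⟩ := mem_toNat.mp hq
      obtain ⟨p', hp', rfl⟩ := mem_toNat.mp hq'
      have := h3 p hp p' hp'
      exact fun hc => this ⟨hc.1, hc.2.1, hc.2.2⟩
  · rintro ⟨h1, h2, h3⟩
    refine ⟨⟨?_, ?_⟩, ?_⟩
    · intro p hp
      exact (h1 _ (mem_toNat.mpr ⟨p, hp, rfl⟩)).1
    · intro p hp p' hp' hne
      have := h2 _ (mem_toNat.mpr ⟨p, hp, rfl⟩) _ (mem_toNat.mpr ⟨p', hp', rfl⟩)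
        (by simp only [ne_eq, Prod.mk.injEq, not_and]
            intro h1' h2'
            exact absurd (Prod.ext (Fin.ext h1') (Fin.ext h2')) hne)
      simp only [ne_eq, Fin.ext_iff]
      exact this
    · intro p hp p' hp'
      have := h3 _ (mem_toNat.mpr ⟨p, hp, rfl⟩) _ (mem_toNat.mpr ⟨p', hp', rfl⟩)
      exact fun hc => this ⟨hc.1, hc.2.1, hc.2.2⟩

lemma sym_iff {m : ℕ} (M : Finset (Fin m × Fin m)) :
    SymmMatching m M ↔ NSym m (arcsN M) := by
  constructor
  · intro h q hq
    obtain ⟨p, hp, rfl⟩ := mem_toNat.mp hq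
    refine mem_toNat.mpr ⟨(p.2.rev, p.1.rev), h p hp, ?_⟩
    simp only [Fin.val_rev]
    congr 1 <;> omega
  · intro h p hp
    have := h _ (mem_toNat.mpr ⟨p, hp, rfl⟩)
    obtain ⟨p', hp', heq⟩ := mem_toNat.mp this
    have : p' = (p.2.rev, p.1.rev) := by
      simp only [Prod.mk.injEq] at heq
      refine Prod.ext (Fin.ext ?_) (Fin.ext ?_) <;>
        simp only [Fin.val_rev] <;> omega
    exact this ▸ hp'

lemma S_eq (m : ℕ) : S m = Nat.card {N : Finset (ℕ × ℕ) // NGood m N} := by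
  refine Nat.card_congr ⟨fun M => ⟨arcsN M.1, (good_iff M.1).mp M.2⟩,
    fun N => ⟨arcsF m N.1, ?_⟩, ?_, ?_⟩
  · have hb : ∀ p ∈ N.1, p.1 < m ∧ p.2 < m := by
      intro p hp
      have := N.2.1 p hp
      omega
    have := (good_iff (arcsF m N.1)).mpr
    rw [toNat_toFin hb] at this
    exact this N.2
  · intro M; exact Subtype.ext (toFin_toNat M.1)
  · intro N
    refine Subtype.ext (toNat_toFin ?_)
    intro p hp
    have := N.2.1 p hp
    omega

lemma R_eq (m : ℕ) : R m = Nat.card {N : Finset (ℕ × ℕ) // NGood m N ∧ NSym m N} := by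
  refine Nat.card_congr ⟨fun M => ⟨arcsN M.1, ⟨(good_iff M.1).mp ⟨M.2.1, M.2.2.1⟩, (sym_iff M.1).mp M.2.2.2⟩⟩,
    fun N => ⟨arcsF m N.1, ?_⟩, ?_, ?_⟩
  · have hb : ∀ p ∈ N.1, p.1 < m ∧ p.2 < m := by
      intro p hp
      have := N.2.1.1 p hp
      omega
    have h1 := (good_iff (arcsF m N.1)).mpr
    have h2 := (sym_iff (arcsF m N.1)).mpr
    rw [toNat_toFin hb] at h1 h2
    obtain ⟨hg, hnc⟩ := h1 N.2.1
    exact ⟨hg, hnc, h2 N.2.2⟩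
  · intro M; exact Subtype.ext (toFin_toNat M.1)
  · intro N
    refine Subtype.ext (toNat_toFin ?_)
    intro p hp
    have := N.2.1.1 p hp
    omega

lemma NGood_small {m : ℕ} (hm : m ≤ 2) {M : Finset (ℕ × ℕ)} (h : NGood m M) : M = ∅ := by
  rcases Finset.eq_empty_or_nonempty M with h' | ⟨p, hp⟩
  · exact h'
  · have := h.1 p hp
    omega

lemma NGood_empty (m : ℕ) : NGood m (∅ : Finset (ℕ × ℕ)) := ⟨by simp, by simp, by simp⟩

lemma NSym_empty (m : ℕ) : NSym m (∅ : Finset (ℕ × ℕ)) := by simp [NSym]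

lemma R_small {m : ℕ} (hm : m ≤ 2) : R m = 1 := by
  rw [R_eq]
  haveI : Unique {N : Finset (ℕ × ℕ) // NGood m N ∧ NSym m N} :=
    { default := ⟨∅, NGood_empty m, NSym_empty m⟩
      uniq := fun N => Subtype.ext (NGood_small hm N.2.1) }
  exact Nat.card_unique

lemma S_small {m : ℕ} (hm : m ≤ 2) : S m = 1 := by
  rw [S_eq]
  haveI : Unique {N : Finset (ℕ × ℕ) // NGood m N} :=
    { default := ⟨∅, NGood_empty m⟩
      uniq := fun N => Subtype.ext (NGood_small hm N.2) }
  exact Nat.card_unique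

lemma finite_NGood (m : ℕ) : {N : Finset (ℕ × ℕ) | NGood m N}.Finite := by
  apply Set.Finite.subset ((Finset.range m ×ˢ Finset.range m).powerset : Finset (Finset (ℕ × ℕ))).finite_toSet
  intro N hN
  simp only [Finset.coe_powerset, Set.mem_preimage, Set.mem_powerset_iff, Finset.coe_subset] at *
  intro p hp
  have := hN.1 p hp
  simp only [Finset.mem_product, Finset.mem_range]
  omega

lemma card_split (P Q : Finset (ℕ × ℕ) → Prop) (hfin : {N | P N}.Finite) :
    Nat.card {N : Finset (ℕ × ℕ) // P N} =
      Nat.card {N : Finset (ℕ × ℕ) // P N ∧ Q N} +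
      Nat.card {N : Finset (ℕ × ℕ) // P N ∧ ¬ Q N} := by
  have h1 : {N | P N} = {N | P N ∧ Q N} ∪ {N | P N ∧ ¬ Q N} := by
    ext N; by_cases hq : Q N <;> simp [hq]
  have hd : Disjoint {N | P N ∧ Q N} {N | P N ∧ ¬ Q N} := by
    rw [Set.disjoint_left]
    rintro N ⟨_, hq⟩ ⟨_, hnq⟩
    exact hnq hq
  have hf1 : {N | P N ∧ Q N}.Finite := hfin.subset (fun N h => h.1)
  have hf2 : {N | P N ∧ ¬ Q N}.Finite := hfin.subset (fun N h => h.1)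
  calc Nat.card {N : Finset (ℕ × ℕ) // P N} = {N | P N}.ncard := Nat.card_coe_set_eq _
    _ = {N | P N ∧ Q N}.ncard + {N | P N ∧ ¬ Q N}.ncard := by rw [h1, Set.ncard_union_eq hd hf1 hf2]
    _ = _ := by rw [← Nat.card_coe_set_eq, ← Nat.card_coe_set_eq]; rfl
/-! ### helpers for images -/

lemma mem_mapimg {f : ℕ → ℕ} {M : Finset (ℕ × ℕ)} {q : ℕ × ℕ} :
    q ∈ M.image (Prod.map f f) ↔ ∃ p ∈ M, (f p.1, f p.2) = q := by
  simp [Finset.mem_image, Prod.map]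

lemma NGood_image {m m' : ℕ} {f : ℕ → ℕ} {M : Finset (ℕ × ℕ)} (h : NGood m M)
    (D : ℕ → Prop) (hD : ∀ p ∈ M, D p.1 ∧ D p.2)
    (hmono : ∀ x y, D x → D y → (f x < f y ↔ x < y))
    (hgap : ∀ p ∈ M, f p.1 + 2 ≤ f p.2 ∧ f p.2 < m') :
    NGood m' (M.image (Prod.map f f)) := by
  have hinj : ∀ x y, D x → D y → f x = f y → x = y := by
    intro x y hx hy hxy
    rcases lt_trichotomy x y with h' | h' | h'
    · exact absurd ((hmono x y hx hy).mpr h') (by omega)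
    · exact h'
    · exact absurd ((hmono y x hy hx).mpr h') (by omega)
  refine ⟨?_, ?_, ?_⟩
  · intro p hp
    obtain ⟨q, hq, rfl⟩ := mem_mapimg.mp hp
    exact hgap q hq
  · intro p hp p' hp' hne
    obtain ⟨q, hq, rfl⟩ := mem_mapimg.mp hp
    obtain ⟨q', hq', rfl⟩ := mem_mapimg.mp hp'
    have hqq : q ≠ q' := by rintro rfl; exact hne rfl
    have hd := h.2.1 q hq q' hq' hqq
    obtain ⟨h1, h2⟩ := hD q hq
    obtain ⟨h1', h2'⟩ := hD q' hq'
    refine ⟨?_, ?_, ?_, ?_⟩ <;>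
      · intro he
        first
        | exact hd.1 (hinj _ _ h1 h1' he)
        | exact hd.2.1 (hinj _ _ h1 h2' he)
        | exact hd.2.2.1 (hinj _ _ h2 h1' he)
        | exact hd.2.2.2 (hinj _ _ h2 h2' he)
  · intro p hp p' hp'
    obtain ⟨q, hq, rfl⟩ := mem_mapimg.mp hp
    obtain ⟨q', hq', rfl⟩ := mem_mapimg.mp hp'
    have hnc := h.2.2 q hq q' hq'
    obtain ⟨h1, h2⟩ := hD q hq
    obtain ⟨h1', h2'⟩ := hD q' hq'
    rintro ⟨c1, c2, c3⟩
    exact hnc ⟨(hmono _ _ h1 h1').mp c1, (hmono _ _ h1' h2).mp c2, (hmono _ _ h2 h2').mp c3⟩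

lemma NSym_image {m m' : ℕ} {f : ℕ → ℕ} {M : Finset (ℕ × ℕ)} (h : NSym m M)
    (hf : ∀ p ∈ M, f (m - 1 - p.2) = m' - 1 - f p.2 ∧ f (m - 1 - p.1) = m' - 1 - f p.1) :
    NSym m' (M.image (Prod.map f f)) := by
  intro p hp
  obtain ⟨q, hq, rfl⟩ := mem_mapimg.mp hp
  refine mem_mapimg.mpr ⟨(m - 1 - q.2, m - 1 - q.1), h q hq, ?_⟩
  obtain ⟨e1, e2⟩ := hf q hq
  simp only [e1, e2]

/-! ### unmatched points -/

def Avoid (M : Finset (ℕ × ℕ)) (x : ℕ) : Prop := ∀ p ∈ M, p.1 ≠ x ∧ p.2 ≠ x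

lemma odd_center_unmatched {k : ℕ} {M : Finset (ℕ × ℕ)}
    (h : NGood (2 * k + 1) M) (hs : NSym (2 * k + 1) M) : Avoid M k := by
  intro p hp
  have hgap := h.1 p hp
  have hq := hs p hp
  set q : ℕ × ℕ := (2 * k + 1 - 1 - p.2, 2 * k + 1 - 1 - p.1) with hqdef
  constructor
  · intro h1
    have hne : p ≠ q := by
      intro he
      have : p.2 = q.2 := by rw [he]
      simp only [hqdef] at this
      omega
    have := (h.2.1 p hp q hq hne).2.1
    simp only [hqdef] at this
    omega
  · intro h2
    have hne : p ≠ q := by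
      intro he
      have : p.1 = q.1 := by rw [he]
      simp only [hqdef] at this
      omega
    have := (h.2.1 p hp q hq hne).2.2.1
    simp only [hqdef] at this
    omega

lemma avoid_succ {n : ℕ} {M : Finset (ℕ × ℕ)} (hn : 2 ≤ n)
    (h : NGood (2 * n) M) (hs : NSym (2 * n) M) (ha : Avoid M (n - 1)) : Avoid M n := by
  intro p hp
  have hgap := h.1 p hp
  have hq := hs p hp
  have h2 := ha _ hq
  simp only at h2
  constructor <;> intro he <;> omega
/-! ### Bijection: symmetric matchings on 2n-1 points ≃ those on 2n avoiding n-1 -/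

def gA (n x : ℕ) : ℕ := if x < n - 1 then x else x + 1
def hA (n x : ℕ) : ℕ := if x < n - 1 then x else x - 1

lemma fwdA {n : ℕ} (hn : 2 ≤ n) {M : Finset (ℕ × ℕ)}
    (hg : NGood (2 * n - 1) M) (hs : NSym (2 * n - 1) M) :
    (NGood (2 * n) (M.image (Prod.map (gA n) (gA n))) ∧
     NSym (2 * n) (M.image (Prod.map (gA n) (gA n)))) ∧
    Avoid (M.image (Prod.map (gA n) (gA n))) (n - 1) := by
  have hodd : 2 * n - 1 = 2 * (n - 1) + 1 := by omega
  have hav : Avoid M (n - 1) := odd_center_unmatched (k := n - 1) (hodd ▸ hg) (hodd ▸ hs)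
  refine ⟨⟨?_, ?_⟩, ?_⟩
  · refine NGood_image hg (fun _ => True) (fun p hp => ⟨trivial, trivial⟩)
      (fun x y _ _ => by simp only [gA]; split_ifs <;> omega) ?_
    intro p hp
    have := hg.1 p hp
    simp only [gA]; split_ifs <;> omega
  · refine NSym_image hs ?_
    intro p hp
    have hb := hg.1 p hp
    have ha := hav p hp
    have ha2 := hav _ (hs p hp)
    simp only at ha2
    simp only [gA]; split_ifs <;> omega
  · intro p hp
    obtain ⟨q, hq, rfl⟩ := mem_mapimg.mp hp
    simp only [gA]
    constructor <;> split_ifs <;> omega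

lemma bwdA {n : ℕ} (hn : 2 ≤ n) {N : Finset (ℕ × ℕ)}
    (hg : NGood (2 * n) N) (hs : NSym (2 * n) N) (hav : Avoid N (n - 1)) :
    NGood (2 * n - 1) (N.image (Prod.map (hA n) (hA n))) ∧
    NSym (2 * n - 1) (N.image (Prod.map (hA n) (hA n))) := by
  have hav2 : Avoid N n := avoid_succ hn hg hs hav
  have hD : ∀ p ∈ N, (p.1 ≠ n - 1 ∧ p.1 ≠ n) ∧ (p.2 ≠ n - 1 ∧ p.2 ≠ n) := fun p hp =>
    ⟨⟨(hav p hp).1, (hav2 p hp).1⟩, ⟨(hav p hp).2, (hav2 p hp).2⟩⟩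
  constructor
  · refine NGood_image hg (fun x => x ≠ n - 1 ∧ x ≠ n) hD
      (fun x y hx hy => by simp only [hA]; split_ifs <;> omega) ?_
    intro p hp
    have h1 := hg.1 p hp
    have h2 := hD p hp
    simp only [hA]; split_ifs <;> omega
  · refine NSym_image hs ?_
    intro p hp
    have hb := hg.1 p hp
    have h1 := hD p hp
    have h2 := hD _ (hs p hp)
    simp only at h2
    simp only [hA]; split_ifs <;> omega

lemma cardA {n : ℕ} (hn : 2 ≤ n) :
    Nat.card {N : Finset (ℕ × ℕ) // NGood (2 * n - 1) N ∧ NSym (2 * n - 1) N} =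
    Nat.card {N : Finset (ℕ × ℕ) // (NGood (2 * n) N ∧ NSym (2 * n) N) ∧ Avoid N (n - 1)} := by
  refine Nat.card_congr
    ⟨fun M => ⟨M.1.image (Prod.map (gA n) (gA n)), fwdA hn M.2.1 M.2.2⟩,
     fun N => ⟨N.1.image (Prod.map (hA n) (hA n)), bwdA hn N.2.1.1 N.2.1.2 N.2.2⟩, ?_, ?_⟩
  · rintro ⟨M, hg, hs⟩
    apply Subtype.ext
    simp only
    rw [Finset.image_image]
    have he : ∀ p ∈ M, (Prod.map (hA n) (hA n) ∘ Prod.map (gA n) (gA n)) p = id p := by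
      intro p hp
      have : p = (p.1, p.2) := rfl
      rw [this]
      simp only [Function.comp, Prod.map, id_eq, gA, hA, Prod.mk.injEq]
      constructor <;> (split_ifs <;> omega)
    rw [Finset.image_congr he, Finset.image_id]
  · rintro ⟨N, ⟨hg, hs⟩, hav⟩
    have hav2 : Avoid N n := avoid_succ hn hg hs hav
    apply Subtype.ext
    simp only
    rw [Finset.image_image]
    have he : ∀ p ∈ N, (Prod.map (gA n) (gA n) ∘ Prod.map (hA n) (hA n)) p = id p := by
      intro p hp
      have h1 := hav p hp
      have h2 := hav2 p hp
      have hb := hg.1 p hp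
      have : p = (p.1, p.2) := rfl
      rw [this]
      simp only [Function.comp, Prod.map, id_eq, gA, hA, Prod.mk.injEq]
      constructor <;> (split_ifs <;> omega)
    rw [Finset.image_congr he, Finset.image_id]
/-! ### symmetric matchings on 2n-2 without center-crossing arc ≃ matchings on n-1 -/

def HasCross (n : ℕ) (M : Finset (ℕ × ℕ)) : Prop := ∃ p ∈ M, p.1 + 2 ≤ n ∧ n ≤ p.2 + 1

def mirA (m : ℕ) (p : ℕ × ℕ) : ℕ × ℕ := (m - 1 - p.2, m - 1 - p.1)

lemma leftright {n : ℕ} {N : Finset (ℕ × ℕ)} (hg : NGood (2 * n - 2) N)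
    (hnc : ¬ HasCross n N) : ∀ p ∈ N, p.2 + 2 ≤ n ∨ n ≤ p.1 + 1 := by
  intro p hp
  have h1 := hg.1 p hp
  by_contra hcon
  exact hnc ⟨p, hp, by omega⟩

lemma fwdD {n : ℕ} (hn : 2 ≤ n) {N : Finset (ℕ × ℕ)}
    (hg : NGood (2 * n - 2) N) :
    NGood (n - 1) (N.filter (fun p => p.2 + 2 ≤ n)) := by
  have hsub := Finset.filter_subset (fun p => p.2 + 2 ≤ n) N
  refine ⟨?_, ?_, ?_⟩
  · intro p hp
    have h1 := (Finset.mem_filter.mp hp).2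
    have h2 := hg.1 p (hsub hp)
    omega
  · intro p hp q hq hne
    exact hg.2.1 p (hsub hp) q (hsub hq) hne
  · intro p hp q hq
    exact hg.2.2 p (hsub hp) q (hsub hq)

lemma bwdD {n : ℕ} (hn : 2 ≤ n) {X : Finset (ℕ × ℕ)} (hg : NGood (n - 1) X) :
    (NGood (2 * n - 2) (X ∪ X.image (mirA (2 * n - 2))) ∧
     NSym (2 * n - 2) (X ∪ X.image (mirA (2 * n - 2)))) ∧
    ¬ HasCross n (X ∪ X.image (mirA (2 * n - 2))) := by
  have hX : ∀ p ∈ X, p.1 + 2 ≤ p.2 ∧ p.2 < n - 1 := hg.1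
  have hmem : ∀ q, q ∈ X ∪ X.image (mirA (2 * n - 2)) ↔
      q ∈ X ∨ ∃ p ∈ X, mirA (2 * n - 2) p = q := by
    intro q; simp [Finset.mem_union, Finset.mem_image]
  refine ⟨⟨⟨?_, ?_, ?_⟩, ?_⟩, ?_⟩
  · intro p hp
    rcases (hmem p).mp hp with h | ⟨q, hq, rfl⟩
    · have := hX p h; omega
    · have := hX q hq; simp only [mirA]; omega
  · intro p hp q hq hne
    rcases (hmem p).mp hp with h | ⟨p', hp', rfl⟩ <;>
      rcases (hmem q).mp hq with h' | ⟨q', hq', rfl⟩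
    · exact hg.2.1 p h q h' hne
    · have h1 := hX p h; have h2 := hX q' hq'
      simp only [mirA]; refine ⟨?_, ?_, ?_, ?_⟩ <;> omega
    · have h1 := hX p' hp'; have h2 := hX q h'
      simp only [mirA]; refine ⟨?_, ?_, ?_, ?_⟩ <;> omega
    · have h1 := hX p' hp'; have h2 := hX q' hq'
      have hne' : p' ≠ q' := by
        rintro rfl; exact hne rfl
      have := hg.2.1 p' hp' q' hq' hne'
      simp only [mirA, ne_eq]; refine ⟨?_, ?_, ?_, ?_⟩ <;> intro hc <;> omega
  · intro p hp q hq
    rcases (hmem p).mp hp with h | ⟨p', hp', rfl⟩ <;>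
      rcases (hmem q).mp hq with h' | ⟨q', hq', rfl⟩
    · exact hg.2.2 p h q h'
    · have h1 := hX p h; have h2 := hX q' hq'
      simp only [mirA]; omega
    · have h1 := hX p' hp'; have h2 := hX q h'
      simp only [mirA]; omega
    · have h1 := hX p' hp'; have h2 := hX q' hq'
      have := hg.2.2 p' hp' q' hq'
      have := hg.2.2 q' hq' p' hp'
      simp only [mirA]; omega
  · intro p hp
    rcases (hmem p).mp hp with h | ⟨p', hp', rfl⟩
    · exact (hmem _).mpr (Or.inr ⟨p, h, rfl⟩)
    · have h1 := hX p' hp'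
      refine (hmem _).mpr (Or.inl ?_)
      have heq : (2 * n - 2 - 1 - (mirA (2 * n - 2) p').2, 2 * n - 2 - 1 - (mirA (2 * n - 2) p').1) = p' := by
        simp only [mirA]
        exact Prod.ext (by simp; omega) (by simp; omega)
      rw [heq]; exact hp'
  · rintro ⟨p, hp, hc1, hc2⟩
    rcases (hmem p).mp hp with h | ⟨p', hp', rfl⟩
    · have := hX p h; omega
    · have := hX p' hp'; simp only [mirA] at hc1 hc2; omega

lemma cardD {n : ℕ} (hn : 2 ≤ n) :
    Nat.card {N : Finset (ℕ × ℕ) // (NGood (2 * n - 2) N ∧ NSym (2 * n - 2) N) ∧ ¬ HasCross n N} =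
    Nat.card {X : Finset (ℕ × ℕ) // NGood (n - 1) X} := by
  refine Nat.card_congr
    ⟨fun N => ⟨N.1.filter (fun p => p.2 + 2 ≤ n), fwdD hn N.2.1.1⟩,
     fun X => ⟨X.1 ∪ X.1.image (mirA (2 * n - 2)), bwdD hn X.2⟩, ?_, ?_⟩
  · rintro ⟨N, ⟨hg, hs⟩, hnc⟩
    apply Subtype.ext
    simp only
    ext p
    simp only [Finset.mem_union, Finset.mem_filter, Finset.mem_image]
    constructor
    · rintro (⟨h, _⟩ | ⟨q, ⟨hq, hq2⟩, rfl⟩)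
      · exact h
      · have := hs q hq
        simpa [mirA] using this
    · intro hp
      rcases leftright hg hnc p hp with h | h
      · exact Or.inl ⟨hp, h⟩
      · refine Or.inr ⟨(2 * n - 2 - 1 - p.2, 2 * n - 2 - 1 - p.1), ⟨hs p hp, ?_⟩, ?_⟩
        · have := hg.1 p hp; simp only; omega
        · have := hg.1 p hp
          simp only [mirA]
          exact Prod.ext (by simp; omega) (by simp; omega)
  · rintro ⟨X, hgX⟩
    apply Subtype.ext
    simp only
    ext p
    simp only [Finset.mem_filter, Finset.mem_union, Finset.mem_image]
    constructor
    · rintro ⟨h | ⟨q, hq, rfl⟩, h2⟩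
      · exact h
      · have := hgX.1 q hq
        simp only [mirA] at h2
        omega
    · intro hp
      have := hgX.1 p hp
      exact ⟨Or.inl hp, by omega⟩
/-! ### the center-matched ≃ has-crossing bijection -/

def g2 (n x : ℕ) : ℕ := if x < n - 1 then x else x + 2
def h2 (n x : ℕ) : ℕ := if x < n - 1 then x else x - 2

def innerP (n : ℕ) (N : Finset (ℕ × ℕ)) (p : ℕ × ℕ) : Prop :=
  (p.1 + 2 ≤ n ∧ n ≤ p.2 + 1) ∧ ∀ q ∈ N, q.1 + 2 ≤ n → n ≤ q.2 + 1 → q.1 ≤ p.1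

instance (n : ℕ) (N : Finset (ℕ × ℕ)) : DecidablePred (innerP n N) := fun p => by
  unfold innerP; infer_instance

def F2B (n : ℕ) (M : Finset (ℕ × ℕ)) : Finset (ℕ × ℕ) :=
  M.filter (fun p => p.2 ≠ n - 1 ∧ p.1 ≠ n)

def PhiB (n : ℕ) (M : Finset (ℕ × ℕ)) : Finset (ℕ × ℕ) :=
  ((F2B n M).image (Prod.map (h2 n) (h2 n))) ∪
  ((M.filter (fun p => p.2 = n - 1)).image (fun p => (p.1, 2 * n - 3 - p.1)))

def PsiB (n : ℕ) (N : Finset (ℕ × ℕ)) : Finset (ℕ × ℕ) :=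
  ((N.filter (fun p => ¬ innerP n N p)).image (Prod.map (g2 n) (g2 n))) ∪
  ((N.filter (innerP n N)).image (fun p => (p.1, n - 1))) ∪
  ((N.filter (innerP n N)).image (fun p => (n, 2 * n - 1 - p.1)))

lemma Bstruct {n : ℕ} (hn : 2 ≤ n) {M : Finset (ℕ × ℕ)}
    (hg : NGood (2 * n) M) (hs : NSym (2 * n) M) (hnav : ¬ Avoid M (n - 1)) :
    ∃ j, j + 2 ≤ n - 1 ∧ (j, n - 1) ∈ M ∧ (n, 2 * n - 1 - j) ∈ M ∧
      (M.filter (fun p => p.2 = n - 1)) = {(j, n - 1)} ∧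
      F2B n M = (M.erase (j, n - 1)).erase (n, 2 * n - 1 - j) := by
  rw [F2B]
  have no_left : ∀ p ∈ M, p.1 ≠ n - 1 := by
    intro p hp he
    have hgap := hg.1 p hp
    have hq := hs p hp
    have hgap2 := hg.1 _ hq
    have := hg.2.2 _ hq p hp
    simp only at this hgap2
    omega
  rw [Avoid] at hnav
  push_neg at hnav
  obtain ⟨p, hp, hcase⟩ := hnav
  have hp2 : p.2 = n - 1 := hcase (no_left p hp)
  set j := p.1 with hj
  have hgapj := hg.1 p hp
  have hmirr := hs p hp
  have hnm : (n, 2 * n - 1 - j) ∈ M := by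
    have he : (2 * n - 1 - p.2, 2 * n - 1 - p.1) = (n, 2 * n - 1 - j) := by
      rw [Prod.mk.injEq]; constructor <;> omega
    rwa [he] at hmirr
  have hpeq : p = (j, n - 1) := Prod.ext rfl hp2
  have uniq : ∀ q ∈ M, q.2 = n - 1 → q = (j, n - 1) := by
    intro q hq hq2
    by_contra hne
    have hne' : q ≠ p := by rw [hpeq]; exact hne
    have := (hg.2.1 q hq p hp hne').2.2.2
    omega
  have uniq2 : ∀ q ∈ M, q.1 = n → q = (n, 2 * n - 1 - j) := by
    intro q hq hq1
    have hmq := hs q hq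
    have hb := hg.1 q hq
    have h2 : (2 * n - 1 - q.2).succ = n ∨ True := Or.inr trivial
    have : (2 * n - 1 - q.2, 2 * n - 1 - q.1) ∈ M := hmq
    have hq2' : (2 * n - 1 - q.2, 2 * n - 1 - q.1).2 = n - 1 := by simp; omega
    have := uniq _ this hq2'
    have e1 : 2 * n - 1 - q.2 = j := congrArg Prod.fst this
    exact Prod.ext hq1 (by omega)
  refine ⟨j, by omega, hpeq ▸ hp, hnm, ?_, ?_⟩
  · ext q
    simp only [Finset.mem_filter, Finset.mem_singleton]
    constructor
    · rintro ⟨hq, hq2⟩; exact uniq q hq hq2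
    · rintro rfl; exact ⟨hpeq ▸ hp, rfl⟩
  · ext q
    simp only [Finset.mem_filter, Finset.mem_erase]
    constructor
    · rintro ⟨hq, h1, h2⟩
      exact ⟨fun he => h2 (by rw [he]), fun he => h1 (by rw [he]), hq⟩
    · rintro ⟨h1, h2, hq⟩
      exact ⟨hq, fun he => h2 (uniq q hq he), fun he => h1 (uniq2 q hq he)⟩

lemma Cstruct {n : ℕ} (hn : 2 ≤ n) {N : Finset (ℕ × ℕ)}
    (hg : NGood (2 * n - 2) N) (hs : NSym (2 * n - 2) N) (hx : HasCross n N) :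
    ∃ a, a + 2 ≤ n - 1 ∧ (a, 2 * n - 3 - a) ∈ N ∧
      N.filter (innerP n N) = {(a, 2 * n - 3 - a)} ∧
      (∀ q ∈ N, q.1 + 2 ≤ n → n ≤ q.2 + 1 → q.1 ≤ a) := by
  obtain ⟨p1, hp1, hc1⟩ := hx
  obtain ⟨p0, hp0mem, hp0max⟩ := Finset.exists_max_image (N.filter (fun q => q.1 + 2 ≤ n ∧ n ≤ q.2 + 1)) Prod.fst ⟨p1, Finset.mem_filter.mpr ⟨hp1, hc1⟩⟩
  obtain ⟨hp0, hc0⟩ := Finset.mem_filter.mp hp0mem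
  have hmax : ∀ q ∈ N, q.1 + 2 ≤ n → n ≤ q.2 + 1 → q.1 ≤ p0.1 := by
    intro q hq h1 h2
    exact hp0max q (Finset.mem_filter.mpr ⟨hq, h1, h2⟩)
  -- p0 is symmetric
  have hb0 := hg.1 p0 hp0
  have hm0 := hs p0 hp0
  have hbm0 := hg.1 _ hm0
  have hsym0 : p0.2 = 2 * n - 3 - p0.1 := by
    by_cases heq : (2 * n - 2 - 1 - p0.2, 2 * n - 2 - 1 - p0.1) = p0
    · have e1 : 2 * n - 2 - 1 - p0.2 = p0.1 := congrArg Prod.fst heq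
      omega
    · exfalso
      have hmmax := hmax _ hm0 (by simp; omega) (by simp; omega)
      have hd := hg.2.1 _ hm0 p0 hp0 heq
      have hcr := hg.2.2 _ hm0 p0 hp0
      simp only at hmmax hd hcr
      omega
  have hinner : innerP n N p0 := ⟨hc0, hmax⟩
  refine ⟨p0.1, by omega, ?_, ?_, by rw [← hsym0] at *; exact hmax⟩
  · have : p0 = (p0.1, 2 * n - 3 - p0.1) := Prod.ext rfl (by omega)
    rwa [← this]
  · ext q
    simp only [Finset.mem_filter, Finset.mem_singleton]
    constructor
    · rintro ⟨hq, hcq, hmq⟩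
      have h1 := hmq p0 hp0 hc0.1 hc0.2
      have h2 := hmax q hq hcq.1 hcq.2
      have he1 : q.1 = p0.1 := by omega
      have : q = p0 := by
        by_contra hne
        have := (hg.2.1 q hq p0 hp0 hne).1
        exact this he1
      rw [this]
      exact Prod.ext rfl (by omega)
    · rintro rfl
      have : (p0.1, 2 * n - 3 - p0.1) = p0 := Prod.ext rfl (by omega)
      rw [this]
      exact ⟨hp0, hinner⟩
lemma NGood_subset {m : ℕ} {M N : Finset (ℕ × ℕ)} (h : M ⊆ N) (hg : NGood m N) : NGood m M :=
  ⟨fun p hp => hg.1 p (h hp), fun p hp q hq => hg.2.1 p (h hp) q (h hq),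
   fun p hp q hq => hg.2.2 p (h hp) q (h hq)⟩

lemma h2_mono {n x y : ℕ} (hn : 2 ≤ n) (hx : x ≠ n - 1 ∧ x ≠ n) (hy : y ≠ n - 1 ∧ y ≠ n) :
    h2 n x < h2 n y ↔ x < y := by
  simp only [h2]; split_ifs <;> omega

lemma h2_gapb {n j u1 u2 : ℕ} (hn : 2 ≤ n) (hjgap : j + 2 ≤ n - 1)
    (h1 : u1 + 2 ≤ u2) (hb : u2 < 2 * n)
    (d1 : u1 ≠ n - 1) (d2 : u1 ≠ n) (d3 : u2 ≠ n - 1) (d4 : u2 ≠ n)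
    (x1 : ¬(j < u1 ∧ u1 < n - 1 ∧ n - 1 < u2)) :
    h2 n u1 + 2 ≤ h2 n u2 ∧ h2 n u2 < 2 * n - 2 := by
  simp only [h2]; split_ifs <;> omega

lemma h2_ne {n j u1 u2 : ℕ} (hn : 2 ≤ n) (hjgap : j + 2 ≤ n - 1)
    (h1 : u1 + 2 ≤ u2) (hb : u2 < 2 * n)
    (d1 : u1 ≠ n - 1) (d2 : u1 ≠ n) (d3 : u2 ≠ n - 1) (d4 : u2 ≠ n)
    (k1 : u1 ≠ j) (k2 : u2 ≠ j) (k3 : u1 ≠ 2 * n - 1 - j) (k4 : u2 ≠ 2 * n - 1 - j) :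
    h2 n u1 ≠ j ∧ h2 n u1 ≠ 2 * n - 3 - j ∧ h2 n u2 ≠ j ∧ h2 n u2 ≠ 2 * n - 3 - j := by
  simp only [h2]; split_ifs <;> omega

lemma h2_nc1 {n j u1 u2 : ℕ} (hn : 2 ≤ n) (hjgap : j + 2 ≤ n - 1)
    (h1 : u1 + 2 ≤ u2) (hb : u2 < 2 * n)
    (d1 : u1 ≠ n - 1) (d2 : u1 ≠ n) (d3 : u2 ≠ n - 1) (d4 : u2 ≠ n)
    (x2 : ¬(u1 < j ∧ j < u2 ∧ u2 < n - 1))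
    (x4 : ¬(u1 < n ∧ n < u2 ∧ u2 < 2 * n - 1 - j)) :
    ¬(h2 n u1 < j ∧ j < h2 n u2 ∧ h2 n u2 < 2 * n - 3 - j) := by
  simp only [h2]; split_ifs <;> omega

lemma h2_nc2 {n j u1 u2 : ℕ} (hn : 2 ≤ n) (hjgap : j + 2 ≤ n - 1)
    (h1 : u1 + 2 ≤ u2) (hb : u2 < 2 * n)
    (d1 : u1 ≠ n - 1) (d2 : u1 ≠ n) (d3 : u2 ≠ n - 1) (d4 : u2 ≠ n)
    (x1 : ¬(j < u1 ∧ u1 < n - 1 ∧ n - 1 < u2))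
    (x3 : ¬(n < u1 ∧ u1 < 2 * n - 1 - j ∧ 2 * n - 1 - j < u2)) :
    ¬(j < h2 n u1 ∧ h2 n u1 < 2 * n - 3 - j ∧ 2 * n - 3 - j < h2 n u2) := by
  simp only [h2]; split_ifs <;> omega

lemma h2_mirid {n u1 u2 : ℕ} (hn : 2 ≤ n) (h1 : u1 + 2 ≤ u2) (hb : u2 < 2 * n)
    (d1 : u1 ≠ n - 1) (d2 : u1 ≠ n) (d3 : u2 ≠ n - 1) (d4 : u2 ≠ n) :
    h2 n (2 * n - 1 - u2) = 2 * n - 2 - 1 - h2 n u2 ∧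
    h2 n (2 * n - 1 - u1) = 2 * n - 2 - 1 - h2 n u1 := by
  simp only [h2]; split_ifs <;> omega

lemma h2_cb {n j u1 u2 : ℕ} (hn : 2 ≤ n) (hjgap : j + 2 ≤ n - 1)
    (h1 : u1 + 2 ≤ u2) (hb : u2 < 2 * n)
    (d1 : u1 ≠ n - 1) (d2 : u1 ≠ n) (d3 : u2 ≠ n - 1) (d4 : u2 ≠ n)
    (x1 : ¬(j < u1 ∧ u1 < n - 1 ∧ n - 1 < u2)) :
    h2 n u1 + 2 ≤ n → n ≤ h2 n u2 + 1 → h2 n u1 ≤ j := by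
  simp only [h2]; split_ifs <;> omega

set_option maxHeartbeats 800000 in
lemma fwdB {n : ℕ} (hn : 2 ≤ n) {M : Finset (ℕ × ℕ)}
    (hg : NGood (2 * n) M) (hs : NSym (2 * n) M) (hnav : ¬ Avoid M (n - 1)) :
    (NGood (2 * n - 2) (PhiB n M) ∧ NSym (2 * n - 2) (PhiB n M)) ∧ HasCross n (PhiB n M) := by
  obtain ⟨j, hjgap, hj1, hj2, hF1, hF2⟩ := Bstruct hn hg hs hnav
  have hmemF2 : ∀ q, q ∈ F2B n M ↔ q ≠ (n, 2 * n - 1 - j) ∧ q ≠ (j, n - 1) ∧ q ∈ M := by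
    intro q; rw [hF2, Finset.mem_erase, Finset.mem_erase]
  have key : ∀ q ∈ F2B n M, (q.1 + 2 ≤ q.2 ∧ q.2 < 2 * n) ∧
      (q.1 ≠ j ∧ q.1 ≠ n - 1 ∧ q.2 ≠ j ∧ q.2 ≠ n - 1) ∧
      (q.1 ≠ n ∧ q.1 ≠ 2 * n - 1 - j ∧ q.2 ≠ n ∧ q.2 ≠ 2 * n - 1 - j) ∧
      ¬(j < q.1 ∧ q.1 < n - 1 ∧ n - 1 < q.2) ∧ ¬(q.1 < j ∧ j < q.2 ∧ q.2 < n - 1) ∧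
      ¬(n < q.1 ∧ q.1 < 2 * n - 1 - j ∧ 2 * n - 1 - j < q.2) ∧
      ¬(q.1 < n ∧ n < q.2 ∧ q.2 < 2 * n - 1 - j) := by
    intro q hq
    obtain ⟨hne2, hne1, hqM⟩ := (hmemF2 q).mp hq
    exact ⟨hg.1 q hqM, hg.2.1 q hqM (j, n - 1) hj1 hne1, hg.2.1 q hqM (n, 2 * n - 1 - j) hj2 hne2,
      hg.2.2 (j, n - 1) hj1 q hqM, hg.2.2 q hqM (j, n - 1) hj1,
      hg.2.2 (n, 2 * n - 1 - j) hj2 q hqM, hg.2.2 q hqM (n, 2 * n - 1 - j) hj2⟩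
  have himg : NGood (2 * n - 2) ((F2B n M).image (Prod.map (h2 n) (h2 n))) := by
    refine NGood_image (NGood_subset (Finset.filter_subset _ _) hg)
      (fun x => x ≠ n - 1 ∧ x ≠ n) ?_ (fun x y hx hy => h2_mono hn hx hy) ?_
    · intro p hp
      have hk := key p hp
      exact ⟨⟨hk.2.1.2.1, hk.2.2.1.1⟩, ⟨hk.2.1.2.2.2, hk.2.2.1.2.2.1⟩⟩
    · intro q hq
      obtain ⟨⟨k1, k2⟩, ⟨k3, k4, k5, k6⟩, ⟨k7, k8, k9, k10⟩, x1, x2, x3, x4⟩ := key q hq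
      exact h2_gapb hn hjgap k1 k2 k4 k7 k6 k9 x1
  have hPhi : PhiB n M = ((F2B n M).image (Prod.map (h2 n) (h2 n))) ∪ {(j, 2 * n - 3 - j)} := by
    rw [PhiB, hF1, Finset.image_singleton]
  have hmemPhi : ∀ q, q ∈ PhiB n M ↔
      q ∈ (F2B n M).image (Prod.map (h2 n) (h2 n)) ∨ q = (j, 2 * n - 3 - j) := by
    intro q; rw [hPhi, Finset.mem_union, Finset.mem_singleton]
  have hF2sym : ∀ q ∈ F2B n M, (2 * n - 1 - q.2, 2 * n - 1 - q.1) ∈ F2B n M := by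
    intro q hq
    obtain ⟨hne2, hne1, hqM⟩ := (hmemF2 q).mp hq
    have hk := key q hq
    refine (hmemF2 _).mpr ⟨?_, ?_, hs q hqM⟩
    · intro he; rw [Prod.mk.injEq] at he; omega
    · intro he; rw [Prod.mk.injEq] at he; omega
  refine ⟨⟨⟨?_, ?_, ?_⟩, ?_⟩, ?_⟩
  · intro p hp
    rcases (hmemPhi p).mp hp with h | rfl
    · exact himg.1 p h
    · exact ⟨by omega, by omega⟩
  · intro p hp q hq hne
    rcases (hmemPhi p).mp hp with h | rfl <;> rcases (hmemPhi q).mp hq with h' | rfl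
    · exact himg.2.1 p h q h' hne
    · obtain ⟨u, hu, rfl⟩ := mem_mapimg.mp h
      obtain ⟨⟨k1, k2⟩, ⟨k3, k4, k5, k6⟩, ⟨k7, k8, k9, k10⟩, x1, x2, x3, x4⟩ := key u hu
      exact h2_ne hn hjgap k1 k2 k4 k7 k6 k9 k3 k5 k8 k10
    · obtain ⟨u, hu, rfl⟩ := mem_mapimg.mp h'
      obtain ⟨⟨k1, k2⟩, ⟨k3, k4, k5, k6⟩, ⟨k7, k8, k9, k10⟩, x1, x2, x3, x4⟩ := key u hu
      have hk := h2_ne hn hjgap k1 k2 k4 k7 k6 k9 k3 k5 k8 k10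
      exact ⟨Ne.symm hk.1, Ne.symm hk.2.2.1, Ne.symm hk.2.1, Ne.symm hk.2.2.2⟩
    · exact absurd rfl hne
  · intro p hp q hq
    rcases (hmemPhi p).mp hp with h | rfl <;> rcases (hmemPhi q).mp hq with h' | rfl
    · exact himg.2.2 p h q h'
    · obtain ⟨u, hu, rfl⟩ := mem_mapimg.mp h
      obtain ⟨⟨k1, k2⟩, ⟨k3, k4, k5, k6⟩, ⟨k7, k8, k9, k10⟩, x1, x2, x3, x4⟩ := key u hu
      exact h2_nc1 hn hjgap k1 k2 k4 k7 k6 k9 x2 x4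
    · obtain ⟨u, hu, rfl⟩ := mem_mapimg.mp h'
      obtain ⟨⟨k1, k2⟩, ⟨k3, k4, k5, k6⟩, ⟨k7, k8, k9, k10⟩, x1, x2, x3, x4⟩ := key u hu
      exact h2_nc2 hn hjgap k1 k2 k4 k7 k6 k9 x1 x3
    · intro hc; omega
  · intro p hp
    rcases (hmemPhi p).mp hp with h | rfl
    · obtain ⟨u, hu, rfl⟩ := mem_mapimg.mp h
      obtain ⟨⟨k1, k2⟩, ⟨k3, k4, k5, k6⟩, ⟨k7, k8, k9, k10⟩, x1, x2, x3, x4⟩ := key u hu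
      have hk := h2_mirid hn k1 k2 k4 k7 k6 k9
      refine (hmemPhi _).mpr (Or.inl (mem_mapimg.mpr
        ⟨(2 * n - 1 - u.2, 2 * n - 1 - u.1), hF2sym u hu, Prod.ext hk.1 hk.2⟩))
    · refine (hmemPhi _).mpr (Or.inr (Prod.ext (by omega) (by omega)))
  · exact ⟨(j, 2 * n - 3 - j), (hmemPhi _).mpr (Or.inr rfl), by constructor <;> omega⟩
/-! ### backward map verification -/

lemma g2_mono {n x y : ℕ} : g2 n x < g2 n y ↔ x < y := by
  simp only [g2]; split_ifs <;> omega

lemma g2_gap {n u1 u2 : ℕ} (h1 : u1 + 2 ≤ u2) (hb : u2 < 2 * n - 2) :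
    g2 n u1 + 2 ≤ g2 n u2 ∧ g2 n u2 < 2 * n := by
  simp only [g2]; split_ifs <;> omega

lemma g2_ne1 {n a u1 u2 : ℕ} (hn : 2 ≤ n) (hagap : a + 2 ≤ n - 1) (h1 : u1 + 2 ≤ u2)
    (d1 : u1 ≠ a) (d3 : u2 ≠ a) :
    g2 n u1 ≠ a ∧ g2 n u1 ≠ n - 1 ∧ g2 n u2 ≠ a ∧ g2 n u2 ≠ n - 1 := by
  simp only [g2]; split_ifs <;> omega

lemma g2_ne2 {n a u1 u2 : ℕ} (hn : 2 ≤ n) (hagap : a + 2 ≤ n - 1) (h1 : u1 + 2 ≤ u2)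
    (d2 : u1 ≠ 2 * n - 3 - a) (d4 : u2 ≠ 2 * n - 3 - a) :
    g2 n u1 ≠ n ∧ g2 n u1 ≠ 2 * n - 1 - a ∧ g2 n u2 ≠ n ∧ g2 n u2 ≠ 2 * n - 1 - a := by
  simp only [g2]; split_ifs <;> omega

lemma g2_nc1 {n a u1 u2 : ℕ} (hn : 2 ≤ n) (hagap : a + 2 ≤ n - 1)
    (x2 : ¬(u1 < a ∧ a < u2 ∧ u2 < 2 * n - 3 - a)) :
    ¬(g2 n u1 < a ∧ a < g2 n u2 ∧ g2 n u2 < n - 1) := by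
  simp only [g2]; split_ifs <;> omega

lemma g2_nc2 {n a u1 u2 : ℕ} (hn : 2 ≤ n) (hagap : a + 2 ≤ n - 1) (d1 : u1 ≠ a)
    (hmx : u1 + 2 ≤ n → n ≤ u2 + 1 → u1 ≤ a) :
    ¬(a < g2 n u1 ∧ g2 n u1 < n - 1 ∧ n - 1 < g2 n u2) := by
  simp only [g2]; split_ifs <;> omega

lemma g2_nc3 {n a u1 u2 : ℕ} (hn : 2 ≤ n) (hagap : a + 2 ≤ n - 1) (h1 : u1 + 2 ≤ u2)
    (d1 : u1 ≠ a) (d4 : u2 ≠ 2 * n - 3 - a)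
    (x1 : ¬(u1 < a ∧ a < u2 ∧ u2 < 2 * n - 3 - a))
    (hmx : u1 + 2 ≤ n → n ≤ u2 + 1 → u1 ≤ a) :
    ¬(g2 n u1 < n ∧ n < g2 n u2 ∧ g2 n u2 < 2 * n - 1 - a) := by
  simp only [g2]; split_ifs <;> omega

lemma g2_nc4 {n a u1 u2 : ℕ} (hn : 2 ≤ n) (hagap : a + 2 ≤ n - 1)
    (x3 : ¬(a < u1 ∧ u1 < 2 * n - 3 - a ∧ 2 * n - 3 - a < u2)) :
    ¬(n < g2 n u1 ∧ g2 n u1 < 2 * n - 1 - a ∧ 2 * n - 1 - a < g2 n u2) := by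
  simp only [g2]; split_ifs <;> omega

lemma g2_mir {n u1 u2 : ℕ} (hn : 2 ≤ n) (h1 : u1 + 2 ≤ u2) (hb : u2 < 2 * n - 2) :
    g2 n (2 * n - 2 - 1 - u2) = 2 * n - 1 - g2 n u2 ∧
    g2 n (2 * n - 2 - 1 - u1) = 2 * n - 1 - g2 n u1 := by
  simp only [g2]; split_ifs <;> omega

set_option maxHeartbeats 800000 in
lemma bwdB {n : ℕ} (hn : 2 ≤ n) {N : Finset (ℕ × ℕ)}
    (hg : NGood (2 * n - 2) N) (hs : NSym (2 * n - 2) N) (hx : HasCross n N) :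
    (NGood (2 * n) (PsiB n N) ∧ NSym (2 * n) (PsiB n N)) ∧ ¬ Avoid (PsiB n N) (n - 1) := by
  obtain ⟨a, hagap, hp0, hG1, hmax⟩ := Cstruct hn hg hs hx
  have hp0il : innerP n N (a, 2 * n - 3 - a) := by
    have : (a, 2 * n - 3 - a) ∈ N.filter (innerP n N) := by rw [hG1]; exact Finset.mem_singleton_self _
    exact (Finset.mem_filter.mp this).2
  have hmemRest : ∀ q, q ∈ N.filter (fun p => ¬ innerP n N p) ↔ q ∈ N ∧ q ≠ (a, 2 * n - 3 - a) := by
    intro q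
    rw [Finset.mem_filter]
    constructor
    · rintro ⟨hq, hni⟩
      refine ⟨hq, fun he => hni (he ▸ hp0il)⟩
    · rintro ⟨hq, hne⟩
      refine ⟨hq, fun hi => hne ?_⟩
      have : q ∈ N.filter (innerP n N) := Finset.mem_filter.mpr ⟨hq, hi⟩
      rw [hG1] at this
      exact Finset.mem_singleton.mp this
  have key : ∀ q ∈ N.filter (fun p => ¬ innerP n N p),
      (q.1 + 2 ≤ q.2 ∧ q.2 < 2 * n - 2) ∧
      (q.1 ≠ a ∧ q.1 ≠ 2 * n - 3 - a ∧ q.2 ≠ a ∧ q.2 ≠ 2 * n - 3 - a) ∧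
      ¬(a < q.1 ∧ q.1 < 2 * n - 3 - a ∧ 2 * n - 3 - a < q.2) ∧
      ¬(q.1 < a ∧ a < q.2 ∧ q.2 < 2 * n - 3 - a) ∧
      (q.1 + 2 ≤ n → n ≤ q.2 + 1 → q.1 ≤ a) := by
    intro q hq
    obtain ⟨hqN, hne⟩ := (hmemRest q).mp hq
    have hd := hg.2.1 q hqN (a, 2 * n - 3 - a) hp0 hne
    exact ⟨hg.1 q hqN, hd, hg.2.2 (a, 2 * n - 3 - a) hp0 q hqN,
      hg.2.2 q hqN (a, 2 * n - 3 - a) hp0, hmax q hqN⟩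
  have hRest : NGood (2 * n - 2) (N.filter (fun p => ¬ innerP n N p)) :=
    NGood_subset (Finset.filter_subset _ _) hg
  have himg : NGood (2 * n) ((N.filter (fun p => ¬ innerP n N p)).image (Prod.map (g2 n) (g2 n))) := by
    refine NGood_image hRest (fun _ => True) (fun p hp => ⟨trivial, trivial⟩)
      (fun x y _ _ => g2_mono) ?_
    intro q hq
    exact g2_gap (key q hq).1.1 (key q hq).1.2
  have hPsi : PsiB n N = ((N.filter (fun p => ¬ innerP n N p)).image (Prod.map (g2 n) (g2 n))
      ∪ {(a, n - 1)}) ∪ {(n, 2 * n - 1 - a)} := by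
    rw [PsiB, hG1, Finset.image_singleton, Finset.image_singleton]
  have hmemPsi : ∀ q, q ∈ PsiB n N ↔
      q ∈ (N.filter (fun p => ¬ innerP n N p)).image (Prod.map (g2 n) (g2 n)) ∨
      q = (a, n - 1) ∨ q = (n, 2 * n - 1 - a) := by
    intro q
    rw [hPsi, Finset.mem_union, Finset.mem_union, Finset.mem_singleton, Finset.mem_singleton, or_assoc]
  have hRS : ∀ q ∈ N.filter (fun p => ¬ innerP n N p),
      (2 * n - 2 - 1 - q.2, 2 * n - 2 - 1 - q.1) ∈ N.filter (fun p => ¬ innerP n N p) := by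
    intro q hq
    obtain ⟨hqN, hne⟩ := (hmemRest q).mp hq
    have hk := key q hq
    refine (hmemRest _).mpr ⟨hs q hqN, fun he => ?_⟩
    rw [Prod.mk.injEq] at he
    omega
  refine ⟨⟨⟨?_, ?_, ?_⟩, ?_⟩, ?_⟩
  · intro p hp
    rcases (hmemPsi p).mp hp with h | rfl | rfl
    · exact himg.1 p h
    · exact ⟨by omega, by omega⟩
    · exact ⟨by omega, by omega⟩
  · intro p hp q hq hne
    rcases (hmemPsi p).mp hp with h | rfl | rfl <;> rcases (hmemPsi q).mp hq with h' | rfl | rfl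
    · exact himg.2.1 p h q h' hne
    · obtain ⟨u, hu, rfl⟩ := mem_mapimg.mp h
      have hk := key u hu
      exact g2_ne1 hn hagap hk.1.1 hk.2.1.1 hk.2.1.2.2.1
    · obtain ⟨u, hu, rfl⟩ := mem_mapimg.mp h
      have hk := key u hu
      exact g2_ne2 hn hagap hk.1.1 hk.2.1.2.1 hk.2.1.2.2.2
    · obtain ⟨u, hu, rfl⟩ := mem_mapimg.mp h'
      have hk := g2_ne1 hn hagap (key u hu).1.1 (key u hu).2.1.1 (key u hu).2.1.2.2.1
      exact ⟨Ne.symm hk.1, Ne.symm hk.2.2.1, Ne.symm hk.2.1, Ne.symm hk.2.2.2⟩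
    · exact absurd rfl hne
    · exact ⟨by omega, by omega, by omega, by omega⟩
    · obtain ⟨u, hu, rfl⟩ := mem_mapimg.mp h'
      have hk := g2_ne2 hn hagap (key u hu).1.1 (key u hu).2.1.2.1 (key u hu).2.1.2.2.2
      exact ⟨Ne.symm hk.1, Ne.symm hk.2.2.1, Ne.symm hk.2.1, Ne.symm hk.2.2.2⟩
    · exact ⟨by omega, by omega, by omega, by omega⟩
    · exact absurd rfl hne
  · intro p hp q hq
    rcases (hmemPsi p).mp hp with h | rfl | rfl <;> rcases (hmemPsi q).mp hq with h' | rfl | rfl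
    · exact himg.2.2 p h q h'
    · obtain ⟨u, hu, rfl⟩ := mem_mapimg.mp h
      have hk := key u hu
      exact g2_nc1 hn hagap hk.2.2.2.1
    · obtain ⟨u, hu, rfl⟩ := mem_mapimg.mp h
      have hk := key u hu
      exact g2_nc3 hn hagap hk.1.1 hk.2.1.1 hk.2.1.2.2.2 hk.2.2.2.1 hk.2.2.2.2
    · obtain ⟨u, hu, rfl⟩ := mem_mapimg.mp h'
      have hk := key u hu
      exact g2_nc2 hn hagap hk.2.1.1 hk.2.2.2.2
    · intro hc; omega
    · intro hc; omega
    · obtain ⟨u, hu, rfl⟩ := mem_mapimg.mp h'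
      have hk := key u hu
      exact g2_nc4 hn hagap hk.2.2.1
    · intro hc; omega
    · intro hc; omega
  · intro p hp
    rcases (hmemPsi p).mp hp with h | rfl | rfl
    · obtain ⟨u, hu, rfl⟩ := mem_mapimg.mp h
      have hk := key u hu
      have hm := g2_mir hn hk.1.1 hk.1.2
      exact (hmemPsi _).mpr (Or.inl (mem_mapimg.mpr
        ⟨(2 * n - 2 - 1 - u.2, 2 * n - 2 - 1 - u.1), hRS u hu, Prod.ext hm.1 hm.2⟩))
    · exact (hmemPsi _).mpr (Or.inr (Or.inr (Prod.ext (by omega) (by omega))))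
    · exact (hmemPsi _).mpr (Or.inr (Or.inl (Prod.ext (by omega) (by omega))))
  · intro hav
    have := (hav (a, n - 1) ((hmemPsi _).mpr (Or.inr (Or.inl rfl)))).2
    omega
/-! ### round trips -/

lemma gh_id {n x : ℕ} (hn : 2 ≤ n) (hb : x < 2 * n) (d1 : x ≠ n - 1) (d2 : x ≠ n) :
    g2 n (h2 n x) = x := by
  simp only [g2, h2]; split_ifs <;> omega

lemma hg_id {n x : ℕ} : h2 n (g2 n x) = x := by
  simp only [g2, h2]; split_ifs <;> omega

set_option maxHeartbeats 1000000 in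
lemma roundBC {n : ℕ} (hn : 2 ≤ n) {M : Finset (ℕ × ℕ)}
    (hg : NGood (2 * n) M) (hs : NSym (2 * n) M) (hnav : ¬ Avoid M (n - 1)) :
    PsiB n (PhiB n M) = M := by
  obtain ⟨j, hjgap, hj1, hj2, hF1, hF2⟩ := Bstruct hn hg hs hnav
  have hmemF2 : ∀ q, q ∈ F2B n M ↔ q ≠ (n, 2 * n - 1 - j) ∧ q ≠ (j, n - 1) ∧ q ∈ M := by
    intro q; rw [hF2, Finset.mem_erase, Finset.mem_erase]
  have key : ∀ q ∈ F2B n M, (q.1 + 2 ≤ q.2 ∧ q.2 < 2 * n) ∧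
      (q.1 ≠ j ∧ q.1 ≠ n - 1 ∧ q.2 ≠ j ∧ q.2 ≠ n - 1) ∧
      (q.1 ≠ n ∧ q.1 ≠ 2 * n - 1 - j ∧ q.2 ≠ n ∧ q.2 ≠ 2 * n - 1 - j) ∧
      ¬(j < q.1 ∧ q.1 < n - 1 ∧ n - 1 < q.2) := by
    intro q hq
    obtain ⟨hne2, hne1, hqM⟩ := (hmemF2 q).mp hq
    exact ⟨hg.1 q hqM, hg.2.1 q hqM (j, n - 1) hj1 hne1, hg.2.1 q hqM (n, 2 * n - 1 - j) hj2 hne2,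
      hg.2.2 (j, n - 1) hj1 q hqM⟩
  have hPhi : PhiB n M = ((F2B n M).image (Prod.map (h2 n) (h2 n))) ∪ {(j, 2 * n - 3 - j)} := by
    rw [PhiB, hF1, Finset.image_singleton]
  have hmemPhi : ∀ q, q ∈ PhiB n M ↔
      q ∈ (F2B n M).image (Prod.map (h2 n) (h2 n)) ∨ q = (j, 2 * n - 3 - j) := by
    intro q; rw [hPhi, Finset.mem_union, Finset.mem_singleton]
  have hinPhi : (j, 2 * n - 3 - j) ∈ PhiB n M := (hmemPhi _).mpr (Or.inr rfl)
  have hIe : innerP n (PhiB n M) (j, 2 * n - 3 - j) := by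
    refine ⟨⟨by omega, by omega⟩, ?_⟩
    intro q hq c1 c2
    rcases (hmemPhi q).mp hq with h | rfl
    · obtain ⟨u, hu, rfl⟩ := mem_mapimg.mp h
      obtain ⟨⟨k1, k2⟩, ⟨k3, k4, k5, k6⟩, ⟨k7, k8, k9, k10⟩, x1⟩ := key u hu
      exact h2_cb hn hjgap k1 k2 k4 k7 k6 k9 x1 c1 c2
    · exact le_refl _
  have hG1' : (PhiB n M).filter (innerP n (PhiB n M)) = {(j, 2 * n - 3 - j)} := by
    ext q
    rw [Finset.mem_filter, Finset.mem_singleton]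
    constructor
    · rintro ⟨hq, hi⟩
      rcases (hmemPhi q).mp hq with h | he
      · exfalso
        obtain ⟨u, hu, rfl⟩ := mem_mapimg.mp h
        obtain ⟨⟨k1, k2⟩, ⟨k3, k4, k5, k6⟩, ⟨k7, k8, k9, k10⟩, x1⟩ := key u hu
        have hle := h2_cb hn hjgap k1 k2 k4 k7 k6 k9 x1 hi.1.1 hi.1.2
        have hge := hi.2 (j, 2 * n - 3 - j) hinPhi (by omega) (by omega)
        have hne := (h2_ne hn hjgap k1 k2 k4 k7 k6 k9 k3 k5 k8 k10).1
        simp only at hge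
        omega
      · exact he
    · rintro rfl
      exact ⟨hinPhi, hIe⟩
  have hRest' : (PhiB n M).filter (fun p => ¬ innerP n (PhiB n M) p) =
      (F2B n M).image (Prod.map (h2 n) (h2 n)) := by
    ext q
    rw [Finset.mem_filter]
    constructor
    · rintro ⟨hq, hni⟩
      rcases (hmemPhi q).mp hq with h | rfl
      · exact h
      · exact absurd hIe hni
    · intro hq
      refine ⟨(hmemPhi q).mpr (Or.inl hq), fun hi => ?_⟩
      have : q ∈ (PhiB n M).filter (innerP n (PhiB n M)) :=
        Finset.mem_filter.mpr ⟨(hmemPhi q).mpr (Or.inl hq), hi⟩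
      rw [hG1', Finset.mem_singleton] at this
      obtain ⟨u, hu, rfl⟩ := mem_mapimg.mp hq
      obtain ⟨⟨k1, k2⟩, ⟨k3, k4, k5, k6⟩, ⟨k7, k8, k9, k10⟩, x1⟩ := key u hu
      have hne := (h2_ne hn hjgap k1 k2 k4 k7 k6 k9 k3 k5 k8 k10).1
      exact hne (congrArg Prod.fst this)
  have himgid : ((F2B n M).image (Prod.map (h2 n) (h2 n))).image (Prod.map (g2 n) (g2 n)) =
      F2B n M := by
    rw [Finset.image_image]
    have he : ∀ p ∈ F2B n M, (Prod.map (g2 n) (g2 n) ∘ Prod.map (h2 n) (h2 n)) p = id p := by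
      intro p hp
      obtain ⟨⟨k1, k2⟩, ⟨k3, k4, k5, k6⟩, ⟨k7, k8, k9, k10⟩, x1⟩ := key p hp
      have : p = (p.1, p.2) := rfl
      rw [this]
      simp only [Function.comp, Prod.map, id_eq, Prod.mk.injEq]
      exact ⟨gh_id hn (by omega) k4 k7, gh_id hn k2 k6 k9⟩
    rw [Finset.image_congr he, Finset.image_id]
  have hfinal : ∀ q, q ∈ PsiB n (PhiB n M) ↔
      (q ∈ F2B n M ∨ q = (j, n - 1)) ∨ q = (n, 2 * n - 1 - j) := by
    intro q
    rw [PsiB, hG1', hRest', Finset.image_singleton, Finset.image_singleton, himgid,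
      Finset.mem_union, Finset.mem_union, Finset.mem_singleton, Finset.mem_singleton]
  ext q
  rw [hfinal q]
  constructor
  · rintro ((h | rfl) | rfl)
    · exact ((hmemF2 q).mp h).2.2
    · exact hj1
    · exact hj2
  · intro hq
    by_cases h1 : q = (j, n - 1)
    · exact Or.inl (Or.inr h1)
    by_cases h2 : q = (n, 2 * n - 1 - j)
    · exact Or.inr h2
    · exact Or.inl (Or.inl ((hmemF2 q).mpr ⟨h2, h1, hq⟩))

set_option maxHeartbeats 1000000 in
lemma roundCB {n : ℕ} (hn : 2 ≤ n) {N : Finset (ℕ × ℕ)}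
    (hg : NGood (2 * n - 2) N) (hs : NSym (2 * n - 2) N) (hx : HasCross n N) :
    PhiB n (PsiB n N) = N := by
  obtain ⟨a, hagap, hp0, hG1, hmax⟩ := Cstruct hn hg hs hx
  have hp0il : innerP n N (a, 2 * n - 3 - a) := by
    have : (a, 2 * n - 3 - a) ∈ N.filter (innerP n N) := by
      rw [hG1]; exact Finset.mem_singleton_self _
    exact (Finset.mem_filter.mp this).2
  have hmemRest : ∀ q, q ∈ N.filter (fun p => ¬ innerP n N p) ↔ q ∈ N ∧ q ≠ (a, 2 * n - 3 - a) := by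
    intro q
    rw [Finset.mem_filter]
    constructor
    · rintro ⟨hq, hni⟩
      exact ⟨hq, fun he => hni (he ▸ hp0il)⟩
    · rintro ⟨hq, hne⟩
      refine ⟨hq, fun hi => hne ?_⟩
      have : q ∈ N.filter (innerP n N) := Finset.mem_filter.mpr ⟨hq, hi⟩
      rw [hG1] at this
      exact Finset.mem_singleton.mp this
  have key : ∀ q ∈ N.filter (fun p => ¬ innerP n N p),
      (q.1 + 2 ≤ q.2 ∧ q.2 < 2 * n - 2) ∧
      (q.1 ≠ a ∧ q.1 ≠ 2 * n - 3 - a ∧ q.2 ≠ a ∧ q.2 ≠ 2 * n - 3 - a) := by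
    intro q hq
    obtain ⟨hqN, hne⟩ := (hmemRest q).mp hq
    exact ⟨hg.1 q hqN, hg.2.1 q hqN (a, 2 * n - 3 - a) hp0 hne⟩
  have hPsi : PsiB n N = (((N.filter (fun p => ¬ innerP n N p)).image (Prod.map (g2 n) (g2 n)))
      ∪ {(a, n - 1)}) ∪ {(n, 2 * n - 1 - a)} := by
    rw [PsiB, hG1, Finset.image_singleton, Finset.image_singleton]
  have hmemPsi : ∀ q, q ∈ PsiB n N ↔
      q ∈ (N.filter (fun p => ¬ innerP n N p)).image (Prod.map (g2 n) (g2 n)) ∨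
      q = (a, n - 1) ∨ q = (n, 2 * n - 1 - a) := by
    intro q
    rw [hPsi, Finset.mem_union, Finset.mem_union, Finset.mem_singleton, Finset.mem_singleton,
      or_assoc]
  have hfil1 : (PsiB n N).filter (fun p => p.2 = n - 1) = {(a, n - 1)} := by
    ext q
    rw [Finset.mem_filter, Finset.mem_singleton]
    constructor
    · rintro ⟨hq, h2eq⟩
      rcases (hmemPsi q).mp hq with h | rfl | rfl
      · exfalso
        obtain ⟨u, hu, rfl⟩ := mem_mapimg.mp h
        obtain ⟨⟨k1, k2⟩, ⟨k3, k4, k5, k6⟩⟩ := key u hu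
        exact (g2_ne1 hn hagap k1 k3 k5).2.2.2 h2eq
      · rfl
      · exfalso; simp only at h2eq; omega
    · rintro rfl
      exact ⟨(hmemPsi _).mpr (Or.inr (Or.inl rfl)), rfl⟩
  have hfil2 : (PsiB n N).filter (fun p => p.2 ≠ n - 1 ∧ p.1 ≠ n) =
      (N.filter (fun p => ¬ innerP n N p)).image (Prod.map (g2 n) (g2 n)) := by
    ext q
    rw [Finset.mem_filter]
    constructor
    · rintro ⟨hq, hc1, hc2⟩
      rcases (hmemPsi q).mp hq with h | rfl | rfl
      · exact h
      · exact absurd rfl hc1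
      · exact absurd rfl hc2
    · intro hq
      refine ⟨(hmemPsi q).mpr (Or.inl hq), ?_, ?_⟩ <;>
        · obtain ⟨u, hu, rfl⟩ := mem_mapimg.mp hq
          obtain ⟨⟨k1, k2⟩, ⟨k3, k4, k5, k6⟩⟩ := key u hu
          first
          | exact (g2_ne1 hn hagap k1 k3 k5).2.2.2
          | exact (g2_ne2 hn hagap k1 k4 k6).1
  have himgid : ((N.filter (fun p => ¬ innerP n N p)).image (Prod.map (g2 n) (g2 n))).image
      (Prod.map (h2 n) (h2 n)) = N.filter (fun p => ¬ innerP n N p) := by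
    rw [Finset.image_image]
    have he : ∀ p ∈ N.filter (fun p => ¬ innerP n N p),
        (Prod.map (h2 n) (h2 n) ∘ Prod.map (g2 n) (g2 n)) p = id p := by
      intro p hp
      have : p = (p.1, p.2) := rfl
      rw [this]
      simp only [Function.comp, Prod.map, id_eq, Prod.mk.injEq]
      exact ⟨hg_id, hg_id⟩
    rw [Finset.image_congr he, Finset.image_id]
  have hfinal : ∀ q, q ∈ PhiB n (PsiB n N) ↔
      q ∈ N.filter (fun p => ¬ innerP n N p) ∨ q = (a, 2 * n - 3 - a) := by
    intro q
    rw [PhiB, F2B, hfil2, hfil1, Finset.image_singleton, himgid,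
      Finset.mem_union, Finset.mem_singleton]
  ext q
  rw [hfinal q]
  constructor
  · rintro (h | rfl)
    · exact ((hmemRest q).mp h).1
    · exact hp0
  · intro hq
    by_cases h1 : q = (a, 2 * n - 3 - a)
    · exact Or.inr h1
    · exact Or.inl ((hmemRest q).mpr ⟨hq, h1⟩)

lemma cardB {n : ℕ} (hn : 2 ≤ n) :
    Nat.card {N : Finset (ℕ × ℕ) // (NGood (2 * n) N ∧ NSym (2 * n) N) ∧ ¬ Avoid N (n - 1)} =
    Nat.card {N : Finset (ℕ × ℕ) // (NGood (2 * n - 2) N ∧ NSym (2 * n - 2) N) ∧ HasCross n N} :=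
  Nat.card_congr
    ⟨fun M => ⟨PhiB n M.1, fwdB hn M.2.1.1 M.2.1.2 M.2.2⟩,
     fun N => ⟨PsiB n N.1, bwdB hn N.2.1.1 N.2.1.2 N.2.2⟩,
     fun M => Subtype.ext (roundBC hn M.2.1.1 M.2.1.2 M.2.2),
     fun N => Subtype.ext (roundCB hn N.2.1.1 N.2.1.2 N.2.2)⟩

/-- `R (2n) = R (2n-1) + R (2n-2) - S (n-1)`, stated additively to
avoid truncated natural subtraction. -/
theorem statement3 :
    ∀ n : ℕ, 1 ≤ n → R (2 * n) + S (n - 1) = R (2 * n - 1) + R (2 * n - 2) := by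
  intro n hn1
  rcases eq_or_lt_of_le hn1 with h1 | h2
  · rw [← h1]
    rw [R_small (by omega), S_small (by omega), R_small (by omega), R_small (by omega)]
  · have hn : 2 ≤ n := h2
    have fin2n : {N : Finset (ℕ × ℕ) | NGood (2 * n) N ∧ NSym (2 * n) N}.Finite :=
      (finite_NGood (2 * n)).subset (fun N h => h.1)
    have fin2n2 : {N : Finset (ℕ × ℕ) | NGood (2 * n - 2) N ∧ NSym (2 * n - 2) N}.Finite :=
      (finite_NGood (2 * n - 2)).subset (fun N h => h.1)
    have e1 : R (2 * n) =
        Nat.card {N : Finset (ℕ × ℕ) //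
          (NGood (2 * n) N ∧ NSym (2 * n) N) ∧ Avoid N (n - 1)} +
        Nat.card {N : Finset (ℕ × ℕ) //
          (NGood (2 * n) N ∧ NSym (2 * n) N) ∧ ¬ Avoid N (n - 1)} := by
      rw [R_eq]
      exact card_split _ (fun N => Avoid N (n - 1)) fin2n
    have e2 : Nat.card {N : Finset (ℕ × ℕ) //
        (NGood (2 * n) N ∧ NSym (2 * n) N) ∧ Avoid N (n - 1)} = R (2 * n - 1) := by
      rw [R_eq (2 * n - 1)]
      exact (cardA hn).symm
    have e3 := cardB hn
    have e4 : R (2 * n - 2) =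
        Nat.card {N : Finset (ℕ × ℕ) //
          (NGood (2 * n - 2) N ∧ NSym (2 * n - 2) N) ∧ HasCross n N} +
        Nat.card {N : Finset (ℕ × ℕ) //
          (NGood (2 * n - 2) N ∧ NSym (2 * n - 2) N) ∧ ¬ HasCross n N} := by
      rw [R_eq]
      exact card_split _ (fun N => HasCross n N) fin2n2
    have e5 : Nat.card {N : Finset (ℕ × ℕ) //
        (NGood (2 * n - 2) N ∧ NSym (2 * n - 2) N) ∧ ¬ HasCross n N} = S (n - 1) := by
      rw [S_eq (n - 1)]
      exact cardD hn
    omega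
end
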